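/- arXiv:1905.06891 — 7 statements merged into one kernel-verified Lean document; each statement's English description precedes it below -/
import Mathlib

section
/- Let n ≥ 2 and let L = {y ∈ ℝⁿ : y₁ ≥ √(y₂² + ⋯ + yₙ²)} be the Lorentz cone. Let x = (x₁, x²) ∈ ℝ × ℝ^{n−1} be a nonzero vector with x² ≠ 0. Then the absolute value of x with respect to L, namely |x|^L = P_L(x) + P_L(−x) (where P_L denotes the metric projection onto L, and P_L(−x) = P_{L*}(−x) since L is self-dual), is given by |x|^L = (1/‖x²‖)·( max(|x₁|, ‖x²‖)·‖x²‖ , min(|x₁|, ‖x²‖)·sgn(x₁)·x² ), where sgn(x₁) is −1, 0 or 1 according as x₁ is negative, zero or positive. -/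
/-!
Write `r = ‖x²‖ > 0`. The vectors `u₁, u₂ = ½ (1, ∓ x² / r)` lie in `L`, are orthogonal with
`‖uᵢ‖² = ½`, and `x = (x₁ - r) u₁ + (x₁ + r) u₂`. The projection of `μ₁ u₁ + μ₂ u₂` onto `L` is
`μ₁⁺ u₁ + μ₂⁺ u₂`, because the residual `-(μ₁⁻ u₁ + μ₂⁻ u₂)` lies in `-L = -L*` and is orthogonal
to it. Hence `P_L(x) + P_L(-x) = |x₁ - r| u₁ + |x₁ + r| u₂`, and the identities
`|x₁ - r| + |x₁ + r| = 2 max(|x₁|, r)` and `|x₁ + r| - |x₁ - r| = 2 min(|x₁|, r) sgn x₁` give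
the formula.
-/

open scoped RealInnerProductSpace

/-- The quadratic form `x ↦ ⟨A x, x⟩` associated with a matrix `A`. -/
noncomputable def quadForm {n : ℕ} (A : Matrix (Fin n) (Fin n) ℝ)
    (x : EuclideanSpace ℝ (Fin n)) : ℝ :=
  ⟪Matrix.toEuclideanLin A x, x⟫

/-- `K` is a cone: closed under multiplication by positive scalars. -/
def IsCone {n : ℕ} (K : Set (EuclideanSpace ℝ (Fin n))) : Prop :=
  ∀ ⦃t : ℝ⦄, 0 < t → ∀ ⦃x⦄, x ∈ K → t • x ∈ K

/-- A proper cone: a pointed closed convex cone with nonempty interior. -/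
def IsProperCone {n : ℕ} (K : Set (EuclideanSpace ℝ (Fin n))) : Prop :=
  IsCone K ∧ Convex ℝ K ∧ IsClosed K ∧ K ∩ (-K) ⊆ {0} ∧ (interior K).Nonempty

/-- The dual cone `K* = {u : ⟨u, y⟩ ≥ 0 for all y ∈ K}`. -/
def dualCone {n : ℕ} (K : Set (EuclideanSpace ℝ (Fin n))) : Set (EuclideanSpace ℝ (Fin n)) :=
  {u | ∀ y ∈ K, 0 ≤ ⟪u, y⟫}

/-- The sublevel set `[φ_A ≤ c] = {x ∈ int K : ⟨A x, x⟩ ≤ c ‖x‖²}`. -/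
noncomputable def sublevel {n : ℕ} (A : Matrix (Fin n) (Fin n) ℝ)
    (K : Set (EuclideanSpace ℝ (Fin n))) (c : ℝ) : Set (EuclideanSpace ℝ (Fin n)) :=
  {x ∈ interior K | quadForm A x ≤ c * ‖x‖ ^ 2}

/-- `‖x²‖² = x₂² + ⋯ + xₙ²`, the squared norm of the tail of `x`. -/
noncomputable def tailNormSq {n : ℕ} [NeZero n] (x : EuclideanSpace ℝ (Fin n)) : ℝ :=
  ∑ i ∈ Finset.univ.erase 0, x i ^ 2

/-- The Lorentz cone `{y : √(y₂² + ⋯ + yₙ²) ≤ y₁}`. -/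
noncomputable def lorentzCone (n : ℕ) [NeZero n] : Set (EuclideanSpace ℝ (Fin n)) :=
  {y | Real.sqrt (tailNormSq y) ≤ y 0}

/-- The vector `(a, b·x²)`: first coordinate `a`, `i`-th coordinate `b * xᵢ` for `i ≠ 0`. -/
noncomputable def mk2 {n : ℕ} [NeZero n] (x : EuclideanSpace ℝ (Fin n)) (a b : ℝ) :
    EuclideanSpace ℝ (Fin n) :=
  (WithLp.equiv 2 (Fin n → ℝ)).symm (fun i => if i = 0 then a else b * x i)

section NearestPoint

variable {F : Type*} [NormedAddCommGroup F] [InnerProductSpace ℝ F]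

theorem eq_of_forall_norm_sub_le_of_inner_le_zero {K : Set F} {z c p : F} (hc : c ∈ K)
    (hzc : ∀ y ∈ K, ⟪z - c, y - c⟫ ≤ 0) (hp : p ∈ K) (hzp : ∀ y ∈ K, ‖z - p‖ ≤ ‖z - y‖) :
    p = c := by
  have expand : ‖z - p‖ ^ 2 = ‖z - c‖ ^ 2 - 2 * ⟪z - c, p - c⟫ + ‖p - c‖ ^ 2 := by
    rw [show z - p = (z - c) - (p - c) by abel]
    exact norm_sub_sq_real _ _
  have hle : ‖z - p‖ ^ 2 ≤ ‖z - c‖ ^ 2 := pow_le_pow_left₀ (norm_nonneg _) (hzp c hc) 2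
  have hpc : ‖p - c‖ ^ 2 ≤ 0 := by linarith [hzc p hp]
  rw [← sub_eq_zero, ← norm_eq_zero]
  exact pow_eq_zero_iff two_ne_zero |>.1 (le_antisymm hpc (sq_nonneg _))

end NearestPoint

theorem abs_sub_add_abs_add {t r : ℝ} (hr : 0 ≤ r) : |t - r| + |t + r| = 2 * max |t| r := by
  rcases abs_cases t with ⟨ht, _⟩ | ⟨ht, _⟩ <;> rcases abs_cases (t - r) with ⟨h₁, _⟩ | ⟨h₁, _⟩ <;>
    rcases abs_cases (t + r) with ⟨h₂, _⟩ | ⟨h₂, _⟩ <;>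
    rcases max_cases |t| r with ⟨hm, _⟩ | ⟨hm, _⟩ <;> linarith

theorem abs_add_sub_abs_sub {t r : ℝ} (hr : 0 ≤ r) :
    |t + r| - |t - r| = 2 * (min |t| r * Real.sign t) := by
  rcases lt_trichotomy t 0 with ht | rfl | ht
  · rw [Real.sign_of_neg ht, abs_of_neg ht]
    rcases abs_cases (t - r) with ⟨h₁, _⟩ | ⟨h₁, _⟩ <;>
    rcases abs_cases (t + r) with ⟨h₂, _⟩ | ⟨h₂, _⟩ <;>
    rcases min_cases (-t) r with ⟨hm, _⟩ | ⟨hm, _⟩ <;> linarith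
  · simp
  · rw [Real.sign_of_pos ht, abs_of_pos ht]
    rcases abs_cases (t - r) with ⟨h₁, _⟩ | ⟨h₁, _⟩ <;>
    rcases abs_cases (t + r) with ⟨h₂, _⟩ | ⟨h₂, _⟩ <;>
    rcases min_cases t r with ⟨hm, _⟩ | ⟨hm, _⟩ <;> linarith

namespace LorentzCone

variable {n : ℕ} [NeZero n]

noncomputable def tail (y : EuclideanSpace ℝ (Fin n)) : EuclideanSpace ℝ (Fin n) :=
  WithLp.toLp 2 fun i => if i = 0 then 0 else y i

@[simp] theorem tail_apply (y : EuclideanSpace ℝ (Fin n)) (i : Fin n) :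
    tail y i = if i = 0 then 0 else y i := rfl

@[simp] theorem mk2_apply (x : EuclideanSpace ℝ (Fin n)) (a b : ℝ) (i : Fin n) :
    mk2 x a b i = if i = 0 then a else b * x i := rfl

theorem tail_mk2 (x : EuclideanSpace ℝ (Fin n)) (a b : ℝ) : tail (mk2 x a b) = b • tail x := by
  ext i; by_cases hi : i = 0 <;> simp [hi]

theorem smul_mk2 (c : ℝ) (x : EuclideanSpace ℝ (Fin n)) (a b : ℝ) :
    c • mk2 x a b = mk2 x (c * a) (c * b) := by
  ext i; by_cases hi : i = 0 <;> simp [hi, mul_assoc]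

theorem sqrt_tailNormSq (y : EuclideanSpace ℝ (Fin n)) : √(tailNormSq y) = ‖tail y‖ := by
  rw [EuclideanSpace.norm_eq, tailNormSq,
    ← Finset.sum_erase (a := 0) (f := fun i => ‖tail y i‖ ^ 2) _ (by simp)]
  congr 1
  refine Finset.sum_congr rfl fun i hi => ?_
  rw [tail_apply, if_neg (Finset.ne_of_mem_erase hi), Real.norm_eq_abs, sq_abs]

theorem mem_iff {y : EuclideanSpace ℝ (Fin n)} : y ∈ lorentzCone n ↔ ‖tail y‖ ≤ y 0 := by
  rw [lorentzCone, Set.mem_ofPred_eq, sqrt_tailNormSq]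

theorem inner_eq (u v : EuclideanSpace ℝ (Fin n)) : ⟪u, v⟫ = u 0 * v 0 + ⟪tail u, tail v⟫ := by
  simp only [PiLp.inner_apply, RCLike.inner_apply, conj_trivial, tail_apply]
  rw [← Finset.add_sum_erase _ _ (Finset.mem_univ 0), mul_comm (v 0),
    ← Finset.sum_erase (a := 0)
      (f := fun i => (if i = 0 then 0 else v i) * (if i = 0 then 0 else u i)) _ (by simp)]
  congr 1
  exact Finset.sum_congr rfl fun i hi => by simp [Finset.ne_of_mem_erase hi]

theorem inner_nonneg {u v : EuclideanSpace ℝ (Fin n)} (hu : u ∈ lorentzCone n)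
    (hv : v ∈ lorentzCone n) : 0 ≤ ⟪u, v⟫ := by
  rw [mem_iff] at hu hv
  rw [inner_eq]
  nlinarith [neg_le_of_abs_le (abs_real_inner_le_norm (tail u) (tail v)),
    norm_nonneg (tail u), norm_nonneg (tail v)]

/-- `μ₁ u₁ + μ₂ u₂`, where `u₁, u₂ = ½ (1, ∓ x² / ‖x²‖)` is the Jordan frame of `x`. -/
noncomputable def spectral (x : EuclideanSpace ℝ (Fin n)) (μ₁ μ₂ : ℝ) : EuclideanSpace ℝ (Fin n) :=
  mk2 x ((μ₁ + μ₂) / 2) ((μ₂ - μ₁) / (2 * ‖tail x‖))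

variable {x : EuclideanSpace ℝ (Fin n)}

theorem eq_spectral (hx : tail x ≠ 0) : x = spectral x (x 0 - ‖tail x‖) (x 0 + ‖tail x‖) := by
  have hr : ‖tail x‖ ≠ 0 := norm_ne_zero_iff.2 hx
  ext i; by_cases hi : i = 0 <;> simp only [spectral, mk2_apply, hi, if_true, if_false] <;>
    field_simp <;> ring

theorem spectral_add (μ₁ μ₂ ν₁ ν₂ : ℝ) :
    spectral x μ₁ μ₂ + spectral x ν₁ ν₂ = spectral x (μ₁ + ν₁) (μ₂ + ν₂) := by
  ext i; by_cases hi : i = 0 <;> simp [spectral, hi] <;> ring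

theorem neg_spectral (μ₁ μ₂ : ℝ) : -spectral x μ₁ μ₂ = spectral x (-μ₁) (-μ₂) := by
  ext i; by_cases hi : i = 0 <;> simp [spectral, hi] <;> ring

theorem spectral_mem {μ₁ μ₂ : ℝ} (h₁ : 0 ≤ μ₁) (h₂ : 0 ≤ μ₂) :
    spectral x μ₁ μ₂ ∈ lorentzCone n := by
  rw [mem_iff, spectral, tail_mk2, norm_smul, mk2_apply, if_pos rfl, Real.norm_eq_abs, abs_div,
    abs_of_nonneg (by positivity : (0 : ℝ) ≤ 2 * ‖tail x‖)]
  rcases eq_or_ne ‖tail x‖ 0 with hr | hr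
  · simp only [hr, mul_zero, div_zero]
    positivity
  · rw [div_mul_eq_mul_div, mul_div_mul_right _ _ hr]
    exact div_le_div_of_nonneg_right (abs_sub_le_iff.2 ⟨by linarith, by linarith⟩) two_pos.le

theorem inner_spectral_spectral (hx : tail x ≠ 0) (μ₁ μ₂ ν₁ ν₂ : ℝ) :
    ⟪spectral x μ₁ μ₂, spectral x ν₁ ν₂⟫ = (μ₁ * ν₁ + μ₂ * ν₂) / 2 := by
  have hr : ‖tail x‖ ≠ 0 := norm_ne_zero_iff.2 hx
  rw [inner_eq, spectral, spectral, tail_mk2, tail_mk2, real_inner_smul_left,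
    real_inner_smul_right, real_inner_self_eq_norm_sq, mk2_apply, mk2_apply, if_pos rfl, if_pos rfl]
  field_simp
  ring

theorem eq_spectral_posPart_of_forall_norm_sub_le (hx : tail x ≠ 0)
    {z p : EuclideanSpace ℝ (Fin n)} {μ₁ μ₂ : ℝ} (hz : z = spectral x μ₁ μ₂)
    (hp : p ∈ lorentzCone n) (hzp : ∀ y ∈ lorentzCone n, ‖z - p‖ ≤ ‖z - y‖) : p = spectral x μ₁⁺ μ₂⁺ := by
  refine eq_of_forall_norm_sub_le_of_inner_le_zero (spectral_mem (posPart_nonneg _)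
    (posPart_nonneg _)) (fun y hy => ?_) hp hzp
  have residual : z - spectral x μ₁⁺ μ₂⁺ = -spectral x μ₁⁻ μ₂⁻ := by
    rw [hz, neg_spectral, sub_eq_add_neg, neg_spectral, spectral_add]
    congr 1 <;> linarith [posPart_sub_negPart μ₁, posPart_sub_negPart μ₂]
  have orthogonal : ⟪spectral x μ₁⁻ μ₂⁻, spectral x μ₁⁺ μ₂⁺⟫ = 0 := by
    have h (a : ℝ) : a⁻ * a⁺ = 0 := by rcases le_total a 0 with ha | ha <;> simp [ha]
    rw [inner_spectral_spectral hx, h, h, add_zero, zero_div]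
  rw [residual, inner_sub_right, inner_neg_left, inner_neg_left, orthogonal, neg_zero, sub_zero,
    neg_nonpos]
  exact inner_nonneg (spectral_mem (negPart_nonneg μ₁) (negPart_nonneg μ₂)) hy

theorem spectral_abs_abs_eq_smul_mk2 (hx : tail x ≠ 0) :
    spectral x |x 0 - ‖tail x‖| |x 0 + ‖tail x‖| = (1 / ‖tail x‖) •
      mk2 x (max |x 0| ‖tail x‖ * ‖tail x‖) (min |x 0| ‖tail x‖ * Real.sign (x 0)) := by
  have hr : ‖tail x‖ ≠ 0 := norm_ne_zero_iff.2 hx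
  rw [spectral, smul_mk2, abs_sub_add_abs_add (norm_nonneg _), abs_add_sub_abs_sub (norm_nonneg _)]
  congr 1 <;> field_simp

end LorentzCone

open LorentzCone

theorem stmt1_general (n : ℕ) [NeZero n] (x : EuclideanSpace ℝ (Fin n))
    (hx2 : ∃ i : Fin n, i ≠ 0 ∧ x i ≠ 0)
    (p q : EuclideanSpace ℝ (Fin n))
    (hpL : p ∈ lorentzCone n) (hp : ∀ y ∈ lorentzCone n, ‖x - p‖ ≤ ‖x - y‖)
    (hqL : q ∈ lorentzCone n) (hq : ∀ y ∈ lorentzCone n, ‖(-x) - q‖ ≤ ‖(-x) - y‖) :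
    p + q = (1 / Real.sqrt (tailNormSq x)) •
      mk2 x (max |x 0| (Real.sqrt (tailNormSq x)) * Real.sqrt (tailNormSq x))
        (min |x 0| (Real.sqrt (tailNormSq x)) * Real.sign (x 0)) := by
  have hx : tail x ≠ 0 := by
    obtain ⟨i, hi0, hxi⟩ := hx2
    exact fun h => hxi (by simpa [hi0] using congr($h i))
  have hp' := eq_spectral_posPart_of_forall_norm_sub_le hx (eq_spectral hx) hpL hp
  have hq' := eq_spectral_posPart_of_forall_norm_sub_le hx
    (by rw [← neg_spectral, ← eq_spectral hx]) hqL hq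
  rw [hp', hq', posPart_neg, posPart_neg, spectral_add, posPart_add_negPart, posPart_add_negPart,
    sqrt_tailNormSq, spectral_abs_abs_eq_smul_mk2 hx]

/-- Formula for the absolute value `|x|^L = P_L(x) + P_{L*}(-x)` of a nonzero vector `x`
with `x² ≠ 0`, where `p = P_L(x)` and `q = P_L(-x) = P_{L*}(-x)` are characterized as
nearest points in the Lorentz cone. -/
theorem stmt1 (n : ℕ) [NeZero n] (hn : 2 ≤ n) (x : EuclideanSpace ℝ (Fin n))
    (hx0 : x ≠ 0) (hx2 : ∃ i : Fin n, i ≠ 0 ∧ x i ≠ 0)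
    (p q : EuclideanSpace ℝ (Fin n))
    (hpL : p ∈ lorentzCone n) (hp : ∀ y ∈ lorentzCone n, ‖x - p‖ ≤ ‖x - y‖)
    (hqL : q ∈ lorentzCone n) (hq : ∀ y ∈ lorentzCone n, ‖(-x) - q‖ ≤ ‖(-x) - y‖) :
    p + q = (1 / Real.sqrt (tailNormSq x)) •
      mk2 x (max |x 0| (Real.sqrt (tailNormSq x)) * Real.sqrt (tailNormSq x))
        (min |x 0| (Real.sqrt (tailNormSq x)) * Real.sign (x 0)) :=
  stmt1_general n x hx2 p q hpL hp hqL hq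
end

section
/- Let n ≥ 2, let L = {y ∈ ℝⁿ : y₁ ≥ √(y₂² + ⋯ + yₙ²)} be the Lorentz cone, let J = diag(1, −1, …, −1) ∈ ℝ^{n×n}, and let A ∈ ℝ^{n×n} be a symmetric matrix. Then A is L-copositive (i.e., ⟨Ax, x⟩ ≥ 0 for all x ∈ L) if and only if there exists ρ ≥ 0 such that the matrix A − ρJ is positive semidefinite. -/
open scoped RealInnerProductSpace

/-!
Copositivity on `L` is nonnegativity of `⟨Ax, x⟩` on `{⟨Jx, x⟩ ≥ 0} = L ∪ -L`, so the theorem is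
the S-lemma for the pair `(A, J)`, with `e₁` as Slater point. For the S-lemma take `ρ` to be the
infimum of `Q` on the level set `{G = 1}`. The bound `ρ G ≤ Q` on `{G < 0}` follows from
`Q u + Q w ≥ 0` whenever `G u = 1` and `G w = -1`: rotating the pair `(u, w)` by an angle at which
`G (cos θ • u + sin θ • w)` vanishes (intermediate value theorem) gives two `G`-isotropic vectors,
on which `Q ≥ 0`, and whose `Q`-values add up to `Q u + Q w`.
-/

open QuadraticMap

namespace QuadraticMap

variable {R M : Type*} [CommRing R] [AddCommGroup M] [Module R M]

theorem map_smul_add_smul (Q : QuadraticForm R M) (a b : R) (x y : M) :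
    Q (a • x + b • y) = a ^ 2 * Q x + a * b * polar Q x y + b ^ 2 * Q y := by
  rw [QuadraticMap.map_add Q (a • x), Q.map_smul, Q.map_smul, polar_smul_left, polar_smul_right]
  simp only [smul_eq_mul]
  ring

end QuadraticMap

namespace QuadraticForm

variable {V : Type*} [AddCommGroup V] [Module ℝ V]

theorem map_inv_sqrt_smul (Q : QuadraticForm ℝ V) {c : ℝ} (hc : 0 ≤ c) (v : V) :
    Q ((√c)⁻¹ • v) = Q v / c := by
  rw [Q.map_smul, ← mul_inv, Real.mul_self_sqrt hc, smul_eq_mul, inv_mul_eq_div]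

theorem exists_isotropic_rotation (G : QuadraticForm ℝ V) {u w : V} (hu : G u = 1)
    (hw : G w = -1) :
    ∃ c s : ℝ, c ^ 2 + s ^ 2 = 1 ∧ G (c • u + s • w) = 0 ∧ G (s • u + (-c) • w) = 0 := by
  set f : ℝ → ℝ := fun θ => G (Real.cos θ • u + Real.sin θ • w)
  have hf : ∀ θ, f θ = Real.cos θ ^ 2 - Real.sin θ ^ 2
      + Real.cos θ * Real.sin θ * polar G u w := fun θ => by
    simp only [f, map_smul_add_smul, hu, hw]
    ring
  have hcont : Continuous f := by
    simp only [funext hf]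
    fun_prop
  obtain ⟨θ, -, hθ⟩ := intermediate_value_Icc' (by positivity : 0 ≤ Real.pi / 2)
    hcont.continuousOn (show (0 : ℝ) ∈ Set.Icc (f (Real.pi / 2)) (f 0) by
      simp only [hf]; norm_num)
  refine ⟨Real.cos θ, Real.sin θ, by rw [add_comm, Real.sin_sq_add_cos_sq], hθ, ?_⟩
  rw [map_smul_add_smul, hu, hw]
  linear_combination hf θ - hθ

theorem add_nonneg_of_nonneg_imp_nonneg (Q G : QuadraticForm ℝ V)
    (hQG : ∀ v, 0 ≤ G v → 0 ≤ Q v) {u w : V} (hu : G u = 1) (hw : G w = -1) :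
    0 ≤ Q u + Q w := by
  obtain ⟨c, s, hcs, h₁, h₂⟩ := exists_isotropic_rotation G hu hw
  have hsum : Q (c • u + s • w) + Q (s • u + (-c) • w) = Q u + Q w := by
    rw [map_smul_add_smul, map_smul_add_smul]
    linear_combination (Q u + Q w) * hcs
  linarith [hQG _ h₁.ge, hQG _ h₂.ge]

theorem s_lemma (Q G : QuadraticForm ℝ V) (hQG : ∀ v, 0 ≤ G v → 0 ≤ Q v)
    (hG : ∃ v, 0 < G v) : ∃ ρ : ℝ, 0 ≤ ρ ∧ ∀ v, ρ * G v ≤ Q v := by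
  set S := Q '' {u | G u = 1}
  obtain ⟨v₀, hv₀⟩ := hG
  have hS : S.Nonempty :=
    ⟨_, (√(G v₀))⁻¹ • v₀, by simp [map_inv_sqrt_smul G hv₀.le, hv₀.ne'], rfl⟩
  have hS0 : ∀ r ∈ S, 0 ≤ r := by
    rintro _ ⟨u, hu, rfl⟩
    exact hQG u (hu.symm ▸ zero_le_one)
  refine ⟨sInf S, le_csInf hS hS0, fun v => ?_⟩
  rcases lt_trichotomy (G v) 0 with hv | hv | hv
  · have hw : G ((√(-G v))⁻¹ • v) = -1 := by
      rw [map_inv_sqrt_smul G (neg_nonneg.2 hv.le), div_neg, div_self hv.ne]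
    have hρ : Q v / G v ≤ sInf S := by
      refine le_csInf hS ?_
      rintro _ ⟨u, hu, rfl⟩
      have := add_nonneg_of_nonneg_imp_nonneg Q G hQG hu hw
      rw [map_inv_sqrt_smul Q (neg_nonneg.2 hv.le), div_neg] at this
      linarith
    exact (div_le_iff_of_neg hv).1 hρ
  · simpa [hv] using hQG v hv.ge
  · have hρ : sInf S ≤ Q v / G v :=
      csInf_le ⟨0, hS0⟩ ⟨_, by simp [map_inv_sqrt_smul G hv.le, hv.ne'],
        map_inv_sqrt_smul Q hv.le v⟩
    exact (le_div_iff₀ hv).1 hρ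

end QuadraticForm

namespace Matrix

variable {R ι : Type*} [CommRing R] [Fintype ι] [DecidableEq ι]

theorem toQuadraticForm'_apply (M : Matrix ι ι R) (v : ι → R) :
    M.toQuadraticForm' v = v ⬝ᵥ M *ᵥ v := by
  simp [toQuadraticForm', toLinearMap₂'_apply']

theorem posSemidef_sub_smul_iff {A B : Matrix ι ι ℝ} (hA : A.IsSymm) (hB : B.IsSymm) (ρ : ℝ) :
    (A - ρ • B).PosSemidef ↔ ∀ v, ρ * B.toQuadraticForm' v ≤ A.toQuadraticForm' v := by
  have hsymm : (A - ρ • B).IsHermitian := by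
    simp only [IsHermitian, conjTranspose_eq_transpose_of_trivial, transpose_sub, transpose_smul,
      hA.eq, hB.eq]
  simp only [posSemidef_iff_dotProduct_mulVec, hsymm, true_and, star_trivial, sub_mulVec,
    smul_mulVec, dotProduct_sub, dotProduct_smul, smul_eq_mul, toQuadraticForm'_apply, sub_nonneg]

end Matrix

open Matrix

theorem quadForm_eq_toQuadraticForm' {n : ℕ} (A : Matrix (Fin n) (Fin n) ℝ)
    (x : EuclideanSpace ℝ (Fin n)) :
    quadForm A x = A.toQuadraticForm' x.ofLp := by
  simp [quadForm, toQuadraticForm'_apply, dotProduct, PiLp.inner_apply, mul_comm]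

section Lorentz

variable {n : ℕ} [NeZero n]

abbrev lorentzMatrix (n : ℕ) [NeZero n] : Matrix (Fin n) (Fin n) ℝ :=
  diagonal fun i => if i = 0 then 1 else -1

theorem lorentzMatrix_toQuadraticForm'_apply (v : Fin n → ℝ) :
    (lorentzMatrix n).toQuadraticForm' v = v 0 ^ 2 - ∑ i ∈ Finset.univ.erase 0, v i ^ 2 := by
  rw [toQuadraticForm'_apply, dotProduct, ← Finset.add_sum_erase _ _ (Finset.mem_univ 0),
    sub_eq_add_neg, ← Finset.sum_neg_distrib]
  congr 1
  · simp [mulVec_diagonal, pow_two]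
  · refine Finset.sum_congr rfl fun i hi => ?_
    simp [mulVec_diagonal, Finset.ne_of_mem_erase hi, pow_two]

theorem toLp_mem_lorentzCone_iff (v : Fin n → ℝ) :
    WithLp.toLp 2 v ∈ lorentzCone n ↔ 0 ≤ v 0 ∧ 0 ≤ (lorentzMatrix n).toQuadraticForm' v := by
  rw [lorentzMatrix_toQuadraticForm'_apply, sub_nonneg, ← Real.sqrt_le_iff]
  rfl

theorem toQuadraticForm'_nonneg_of_copositive {A : Matrix (Fin n) (Fin n) ℝ}
    (hA : ∀ x ∈ lorentzCone n, 0 ≤ quadForm A x) {v : Fin n → ℝ}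
    (hv : 0 ≤ (lorentzMatrix n).toQuadraticForm' v) : 0 ≤ A.toQuadraticForm' v := by
  rcases le_total 0 (v 0) with h | h
  · simpa [quadForm_eq_toQuadraticForm'] using hA _ ((toLp_mem_lorentzCone_iff v).2 ⟨h, hv⟩)
  · have hmem := (toLp_mem_lorentzCone_iff (-v)).2
      ⟨by simpa using h, by rwa [QuadraticMap.map_neg]⟩
    simpa [quadForm_eq_toQuadraticForm'] using hA _ hmem

end Lorentz

theorem stmt2_general (n : ℕ) [NeZero n]
    (A : Matrix (Fin n) (Fin n) ℝ) (hA : A.IsSymm) :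
    (∀ x ∈ lorentzCone n, 0 ≤ quadForm A x) ↔
      ∃ ρ : ℝ, 0 ≤ ρ ∧
        (A - ρ • Matrix.diagonal (fun i : Fin n => if i = 0 then (1 : ℝ) else -1)).PosSemidef := by
  have hJ : (lorentzMatrix n).IsSymm := isSymm_diagonal _
  constructor
  · intro hcop
    have hslater : 0 < (lorentzMatrix n).toQuadraticForm' (Pi.single 0 1) := by
      simp [lorentzMatrix_toQuadraticForm'_apply, Pi.single_apply]
    obtain ⟨ρ, hρ, hle⟩ := QuadraticForm.s_lemma A.toQuadraticForm' _
      (fun _ => toQuadraticForm'_nonneg_of_copositive hcop) ⟨_, hslater⟩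
    exact ⟨ρ, hρ, (posSemidef_sub_smul_iff hA hJ ρ).2 hle⟩
  · rintro ⟨ρ, hρ, hpsd⟩ x hx
    obtain ⟨-, hJx⟩ := (toLp_mem_lorentzCone_iff x.ofLp).1 hx
    rw [quadForm_eq_toQuadraticForm']
    nlinarith [(posSemidef_sub_smul_iff hA hJ ρ).1 hpsd x.ofLp]

/-- A symmetric matrix `A` is Lorentz-copositive iff `A - ρJ` is positive semidefinite
for some `ρ ≥ 0`, where `J = diag(1, -1, …, -1)`. -/
theorem stmt2 (n : ℕ) [NeZero n] (hn : 2 ≤ n)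
    (A : Matrix (Fin n) (Fin n) ℝ) (hA : A.IsSymm) :
    (∀ x ∈ lorentzCone n, 0 ≤ quadForm A x) ↔
      ∃ ρ : ℝ, 0 ≤ ρ ∧
        (A - ρ • Matrix.diagonal (fun i : Fin n => if i = 0 then (1 : ℝ) else -1)).PosSemidef :=
  stmt2_general n A hA
end

section
/- Let K ⊆ ℝⁿ be a proper self-dual cone (K = K*) and A ∈ ℝ^{n×n} a symmetric matrix. Assume that ⟨Ax, y⟩ ≤ ⟨x, y⟩ · max{⟨Ax, x⟩, ⟨Ay, y⟩} for all unit vectors x, y ∈ K (the paper's characterization of q_A(x) = ⟨Ax, x⟩ being spherically quasi-convex). Then A has the K-Z-property: ⟨Ax, y⟩ ≤ 0 for all x ∈ K and y ∈ K with ⟨x, y⟩ = 0. -/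
open scoped RealInnerProductSpace

/- On orthogonal unit vectors of `K` the right-hand side of the hypothesis vanishes. Since
`⟨A x, y⟩` and `⟨x, y⟩` are positively homogeneous in `x` and in `y`, and `K` is a cone,
normalizing extends `⟨A x, y⟩ ≤ 0` to all orthogonal pairs in `K`. -/

theorem inner_map_nonpos_of_forall_norm_eq_one {E : Type*} [NormedAddCommGroup E]
    [InnerProductSpace ℝ E] (T : E →ₗ[ℝ] E) {K : Set E}
    (hK : ∀ ⦃t : ℝ⦄, 0 < t → ∀ ⦃x⦄, x ∈ K → t • x ∈ K)
    (h : ∀ x ∈ K, ∀ y ∈ K, ‖x‖ = 1 → ‖y‖ = 1 → ⟪x, y⟫ = 0 → ⟪T x, y⟫ ≤ 0) :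
    ∀ x ∈ K, ∀ y ∈ K, ⟪x, y⟫ = 0 → ⟪T x, y⟫ ≤ 0 := by
  intro x hx y hy hxy
  rcases eq_or_ne x 0 with rfl | hx0
  · simp
  rcases eq_or_ne y 0 with rfl | hy0
  · simp
  have hnx : 0 < ‖x‖ := norm_pos_iff.mpr hx0
  have hny : 0 < ‖y‖ := norm_pos_iff.mpr hy0
  have hunit : ⟪T (‖x‖⁻¹ • x), ‖y‖⁻¹ • y⟫ ≤ 0 :=
    h _ (hK (inv_pos.mpr hnx) hx) _ (hK (inv_pos.mpr hny) hy) (norm_smul_inv_norm hx0)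
      (norm_smul_inv_norm hy0) (by simp [real_inner_smul_left, real_inner_smul_right, hxy])
  have hscale : ⟪T x, y⟫ = (‖x‖ * ‖y‖) * ⟪T (‖x‖⁻¹ • x), ‖y‖⁻¹ • y⟫ := by
    rw [map_smul, real_inner_smul_left, real_inner_smul_right]
    field_simp
  rw [hscale]
  exact mul_nonpos_of_nonneg_of_nonpos (by positivity) hunit

theorem stmt4_general (n : ℕ) (K : Set (EuclideanSpace ℝ (Fin n)))
    (hK : IsProperCone K)
    (A : Matrix (Fin n) (Fin n) ℝ)
    (hyp : ∀ x ∈ K, ∀ y ∈ K, ‖x‖ = 1 → ‖y‖ = 1 →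
      ⟪Matrix.toEuclideanLin A x, y⟫ ≤ ⟪x, y⟫ * max (quadForm A x) (quadForm A y)) :
    ∀ x ∈ K, ∀ y ∈ K, ⟪x, y⟫ = 0 → ⟪Matrix.toEuclideanLin A x, y⟫ ≤ 0 :=
  inner_map_nonpos_of_forall_norm_eq_one _ hK.1 fun x hx y hy hnx hny hxy => by
    simpa [hxy] using hyp x hx y hy hnx hny

/-- If `K` is a proper self-dual cone and `q_A` satisfies the spherical quasi-convexity
characterization (b), then `A` has the `K`-Z-property. -/
theorem stmt4 (n : ℕ) (K : Set (EuclideanSpace ℝ (Fin n)))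
    (hK : IsProperCone K) (hself : dualCone K = K)
    (A : Matrix (Fin n) (Fin n) ℝ) (hA : A.IsSymm)
    (hyp : ∀ x ∈ K, ∀ y ∈ K, ‖x‖ = 1 → ‖y‖ = 1 →
      ⟪Matrix.toEuclideanLin A x, y⟫ ≤ ⟪x, y⟫ * max (quadForm A x) (quadForm A y)) :
    ∀ x ∈ K, ∀ y ∈ K, ⟪x, y⟫ = 0 → ⟪Matrix.toEuclideanLin A x, y⟫ ≤ 0 :=
  stmt4_general n K hK A hyp
end

section
/- Let n ≥ 2, let K ⊆ ℝⁿ be a proper subdual cone, let A ∈ ℝ^{n×n} be symmetric, and let {v¹, …, vⁿ} be an orthonormal system of eigenvectors of A with A vⁱ = λᵢ vⁱ and λ₁ < λ₂ ≤ ⋯ ≤ λₙ. For c ∈ (λ₁, λ₂] set θᵢ(c) = (λᵢ − c)/(c − λ₁) for i = 2, …, n and L_c = {x ∈ ℝⁿ : ⟨v¹, x⟩ ≥ √(θ₂(c)⟨v², x⟩² + ⋯ + θₙ(c)⟨vⁿ, x⟩²)}, and set W = (L_{λ₂} ∪ (−L_{λ₂})) ∩ int(K). Then the sublevel set [φ_A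 ≤ c] = {x ∈ int(K) : ⟨Ax, x⟩ ≤ c‖x‖²} is convex for every c ∉ (λ₂, λₙ) if and only if v¹ ∈ W* ∪ (−W*), where W* = {u ∈ ℝⁿ : ⟨u, x⟩ ≥ 0 for all x ∈ W} is the dual cone of W. -/
open scoped RealInnerProductSpace

/-- The elliptic cone `L = {x : √(∑_{i≥2} θᵢ ⟨vⁱ, x⟩²) ≤ ⟨v¹, x⟩}`. -/
noncomputable def ellipCone {n : ℕ} [NeZero n]
    (v : Fin n → EuclideanSpace ℝ (Fin n)) (θ : Fin n → ℝ) :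
    Set (EuclideanSpace ℝ (Fin n)) :=
  {x | Real.sqrt (∑ i ∈ Finset.univ.erase 0, θ i * ⟪v i, x⟫ ^ 2) ≤ ⟪v 0, x⟫}

/-!
Indices are `0`-based in the code: `v 0 = v¹`, `lam 0 = λ₁`, `lam 1 = λ₂`.

In the eigenbasis `⟨Ax, x⟩ - c‖x‖² = ∑ᵢ (λᵢ - c)⟨vⁱ, x⟩²`, so `W = [φ_A ≤ λ₂]`. Since `0 ∉ int K`,
`[φ_A ≤ c]` is empty for `c < λ₁`, and it is `int K` for `c ≥ λₙ`. For `λ₁ ≤ c ≤ λ₂` it is `int K`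
cut with the double cone `∑_{i ≥ 2} (λᵢ - c)⟨vⁱ, x⟩² ≤ (c - λ₁)⟨v¹, x⟩²`, and it lies in `W`; so if
`±v¹ ∈ W*` it lies in one nappe, which is a convex second-order cone.

Conversely, take `x, y ∈ W` with `⟨v¹, x⟩ < 0 < ⟨v¹, y⟩`. Pushing them slightly along `∓v¹` puts
both in `[φ_A ≤ c]` for some `c < λ₂`; were it convex, it would contain a `z` with `⟨v¹, z⟩ = 0`.
On that hyperplane the form is positive definite for `c < λ₂`, so `z = 0 ∉ int K`.
-/

open Finset Topology

section

variable {ι E F : Type*} [NormedAddCommGroup E] [InnerProductSpace ℝ E]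

lemma zero_notMem_interior_of_inter_neg_subset [Nontrivial E] {K : Set E}
    (hK : K ∩ -K ⊆ {0}) : (0 : E) ∉ interior K := by
  intro h
  have hK0 : K ∩ -K ∈ 𝓝 (0 : E) := Filter.inter_mem (mem_interior_iff_mem_nhds.1 h)
    (neg_mem_nhds_zero E (mem_interior_iff_mem_nhds.1 h))
  exact not_isOpen_singleton (0 : E) <| isOpen_iff_mem_nhds.2 <| by
    rintro x rfl
    exact Filter.mem_of_superset hK0 hK

lemma convex_setOf_norm_le [SeminormedAddCommGroup F] [NormedSpace ℝ F]
    (T : E →ₗ[ℝ] F) (ℓ : E →ₗ[ℝ] ℝ) : Convex ℝ {x | ‖T x‖ ≤ ℓ x} := by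
  have := ((convexOn_norm convex_univ).comp_linearMap T).sub (ℓ.concaveOn convex_univ)
  simpa [sub_nonpos] using this.convex_le 0

lemma convex_setOf_sum_mul_inner_sq_le (s : Finset ι) (v : ι → E) {w : ι → ℝ}
    (hw : ∀ i ∈ s, 0 ≤ w i) (u : E) :
    Convex ℝ {x | ∑ i ∈ s, w i * ⟪v i, x⟫ ^ 2 ≤ ⟪u, x⟫ ^ 2 ∧ 0 ≤ ⟪u, x⟫} := by
  let T : E →ₗ[ℝ] EuclideanSpace ℝ s := (WithLp.linearEquiv 2 ℝ (s → ℝ)).symm.toLinearMap ∘ₗ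
    LinearMap.pi fun i : s => √(w i) • innerₛₗ ℝ (v i)
  have hT : ∀ x, ‖T x‖ ^ 2 = ∑ i ∈ s, w i * ⟪v i, x⟫ ^ 2 := by
    intro x
    rw [EuclideanSpace.norm_eq, Real.sq_sqrt (by positivity), ← Finset.sum_coe_sort s]
    refine Finset.sum_congr rfl fun i _ => ?_
    simp [T, mul_pow, Real.sq_sqrt (hw i i.2)]
  convert convex_setOf_norm_le T (innerₛₗ ℝ u) using 1
  ext x
  simp only [Set.mem_ofPred_eq, innerₛₗ_apply_apply, ← hT]
  exact ⟨fun h => (sq_le_sq₀ (norm_nonneg _) h.2).1 h.1,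
    fun h => ⟨pow_le_pow_left₀ (norm_nonneg _) h 2, (norm_nonneg _).trans h⟩⟩

lemma Orthonormal.exists_orthonormalBasis_coe_eq [Fintype ι] [FiniteDimensional ℝ E]
    {v : ι → E} (hv : Orthonormal ℝ v) (hcard : Fintype.card ι = Module.finrank ℝ E) :
    ∃ b : OrthonormalBasis ι ℝ E, ⇑b = v :=
  ⟨.mk hv (hv.linearIndependent.span_eq_top_of_card_eq_finrank' hcard).ge,
    OrthonormalBasis.coe_mk _ _⟩

lemma OrthonormalBasis.inner_map_self_eq_sum [Fintype ι] (b : OrthonormalBasis ι ℝ E)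
    {f : E →ₗ[ℝ] E} {μ : ι → ℝ} (hf : ∀ i, f (b i) = μ i • b i) (x : E) :
    ⟪f x, x⟫ = ∑ i, μ i * ⟪b i, x⟫ ^ 2 := by
  nth_rewrite 1 [← b.sum_repr' x]
  simp only [map_sum, map_smul, hf, sum_inner, real_inner_smul_left]
  exact Finset.sum_congr rfl fun i _ => by ring

lemma Orthonormal.inner_add_smul_sq [DecidableEq ι] {v : ι → E} (hv : Orthonormal ℝ v)
    (x : E) (t : ℝ) (i j : ι) :
    ⟪v i, x + t • v j⟫ ^ 2 = ⟪v i, x⟫ ^ 2 + if i = j then 2 * t * ⟪v j, x⟫ + t ^ 2 else 0 := by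
  rw [inner_add_right, real_inner_smul_right, orthonormal_iff_ite.1 hv]
  split_ifs with h
  · subst h; ring
  · ring

end

section Sublevel

variable {n : ℕ} {A : Matrix (Fin n) (Fin n) ℝ} {K : Set (EuclideanSpace ℝ (Fin n))}

lemma sublevel_mono {c c' : ℝ} (h : c ≤ c') : sublevel A K c ⊆ sublevel A K c' :=
  fun _ hx => ⟨hx.1, hx.2.trans (by gcongr)⟩

lemma exists_lt_mem_sublevel {x : EuclideanSpace ℝ (Fin n)} {c : ℝ} (hx : x ∈ interior K)
    (h : quadForm A x < c * ‖x‖ ^ 2) : ∃ c' < c, x ∈ sublevel A K c' := by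
  have hx0 : x ≠ 0 := by
    rintro rfl
    simp [quadForm] at h
  have hpos : 0 < ‖x‖ ^ 2 := by positivity
  refine ⟨quadForm A x / ‖x‖ ^ 2, (div_lt_iff₀ hpos).2 h, hx, ?_⟩
  rw [div_mul_cancel₀ _ hpos.ne']

variable {v : Fin n → EuclideanSpace ℝ (Fin n)} {lam : Fin n → ℝ}

lemma quadForm_sub_mul_norm_sq (hv : Orthonormal ℝ v)
    (heig : ∀ i, Matrix.toEuclideanLin A (v i) = lam i • v i) (c : ℝ)
    (x : EuclideanSpace ℝ (Fin n)) :
    quadForm A x - c * ‖x‖ ^ 2 = ∑ i, (lam i - c) * ⟪v i, x⟫ ^ 2 := by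
  obtain ⟨b, rfl⟩ := hv.exists_orthonormalBasis_coe_eq (by simp)
  rw [quadForm, b.inner_map_self_eq_sum heig, ← b.sum_sq_inner_right, mul_sum,
    ← sum_sub_distrib]
  exact Finset.sum_congr rfl fun i _ => by ring

lemma mem_sublevel_iff (hv : Orthonormal ℝ v)
    (heig : ∀ i, Matrix.toEuclideanLin A (v i) = lam i • v i) {c : ℝ}
    {x : EuclideanSpace ℝ (Fin n)} :
    x ∈ sublevel A K c ↔ x ∈ interior K ∧ ∑ i, (lam i - c) * ⟪v i, x⟫ ^ 2 ≤ 0 := by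
  rw [sublevel, Set.mem_sep_iff, ← quadForm_sub_mul_norm_sq hv heig, sub_nonpos]

lemma eq_zero_of_sum_sub_mul_inner_sq_nonpos (hv : Orthonormal ℝ v) {c : ℝ}
    {x : EuclideanSpace ℝ (Fin n)} (hc : ∀ i, ⟪v i, x⟫ ≠ 0 → c < lam i)
    (hq : ∑ i, (lam i - c) * ⟪v i, x⟫ ^ 2 ≤ 0) : x = 0 := by
  obtain ⟨b, rfl⟩ := hv.exists_orthonormalBasis_coe_eq (by simp)
  by_contra hx
  obtain ⟨j, hj⟩ : ∃ j, ⟪b j, x⟫ ≠ 0 := by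
    by_contra! h
    exact hx (by rw [← b.sum_repr' x]; simp [h])
  have hnonneg : ∀ i, 0 ≤ (lam i - c) * ⟪b i, x⟫ ^ 2 := fun i => by
    by_cases hi : ⟪b i, x⟫ = 0
    · simp [hi]
    · exact mul_nonneg (sub_nonneg.2 (hc i hi).le) (sq_nonneg _)
  have hpos : 0 < ∑ i, (lam i - c) * ⟪b i, x⟫ ^ 2 :=
    sum_pos' (fun i _ => hnonneg i)
      ⟨j, mem_univ j, mul_pos (sub_pos.2 (hc j hj)) (by positivity)⟩
  linarith

lemma sublevel_eq_interior (hv : Orthonormal ℝ v)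
    (heig : ∀ i, Matrix.toEuclideanLin A (v i) = lam i • v i) {c : ℝ} (hc : ∀ i, lam i ≤ c) :
    sublevel A K c = interior K := by
  ext x
  rw [mem_sublevel_iff hv heig, and_iff_left_iff_imp]
  exact fun _ => sum_nonpos fun i _ => mul_nonpos_of_nonpos_of_nonneg
    (sub_nonpos.2 (hc i)) (sq_nonneg _)

lemma sublevel_eq_empty (hv : Orthonormal ℝ v)
    (heig : ∀ i, Matrix.toEuclideanLin A (v i) = lam i • v i) (hK0 : 0 ∉ interior K) {c : ℝ}
    (hc : ∀ i, c < lam i) : sublevel A K c = ∅ := by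
  refine Set.eq_empty_of_forall_notMem fun x hx => ?_
  obtain ⟨hxK, hq⟩ := (mem_sublevel_iff hv heig).1 hx
  exact hK0 (eq_zero_of_sum_sub_mul_inner_sq_nonpos hv (fun i _ => hc i) hq ▸ hxK)

lemma sum_sub_mul_inner_add_smul_sq (hv : Orthonormal ℝ v) (c : ℝ)
    (x : EuclideanSpace ℝ (Fin n)) (t : ℝ) (j : Fin n) :
    ∑ i, (lam i - c) * ⟪v i, x + t • v j⟫ ^ 2 =
      ∑ i, (lam i - c) * ⟪v i, x⟫ ^ 2 + (lam j - c) * (2 * t * ⟪v j, x⟫ + t ^ 2) := by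
  simp [hv.inner_add_smul_sq, mul_add, sum_add_distrib]

end Sublevel

section EigenCoordinates

variable {n : ℕ} [NeZero n] {A : Matrix (Fin n) (Fin n) ℝ}
  {K : Set (EuclideanSpace ℝ (Fin n))} {v : Fin n → EuclideanSpace ℝ (Fin n)} {lam : Fin n → ℝ}

lemma sum_sub_mul_inner_sq_nonpos_iff (c : ℝ) (x : EuclideanSpace ℝ (Fin n)) :
    ∑ i, (lam i - c) * ⟪v i, x⟫ ^ 2 ≤ 0 ↔
      ∑ i ∈ univ.erase 0, (lam i - c) * ⟪v i, x⟫ ^ 2 ≤ (c - lam 0) * ⟪v 0, x⟫ ^ 2 := by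
  rw [← add_sum_erase _ _ (mem_univ 0)]
  constructor <;> intro h <;> linarith

lemma mem_ellipCone_union_neg_iff (θ : Fin n → ℝ) (x : EuclideanSpace ℝ (Fin n)) :
    x ∈ ellipCone v θ ∪ -ellipCone v θ ↔
      ∑ i ∈ univ.erase 0, θ i * ⟪v i, x⟫ ^ 2 ≤ ⟪v 0, x⟫ ^ 2 := by
  simp only [Set.mem_union, Set.mem_neg, ellipCone, Set.mem_ofPred_eq, inner_neg_right,
    neg_sq]
  rw [← le_abs, ← Real.sqrt_sq_eq_abs, Real.sqrt_le_sqrt_iff (sq_nonneg _)]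

lemma ellipCone_union_neg_inter_interior_eq_sublevel (hv : Orthonormal ℝ v)
    (heig : ∀ i, Matrix.toEuclideanLin A (v i) = lam i • v i) (h01 : lam 0 < lam 1) :
    let L := ellipCone v fun i => (lam i - lam 1) / (lam 1 - lam 0)
    (L ∪ -L) ∩ interior K = sublevel A K (lam 1) := by
  ext x
  rw [Set.mem_inter_iff, mem_ellipCone_union_neg_iff, mem_sublevel_iff hv heig, and_comm,
    sum_sub_mul_inner_sq_nonpos_iff, ← div_le_iff₀' (sub_pos.2 h01), sum_div]
  simp only [div_mul_eq_mul_div]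

lemma convex_sublevel_of_forall_inner_nonneg (hv : Orthonormal ℝ v)
    (heig : ∀ i, Matrix.toEuclideanLin A (v i) = lam i • v i) (hK : Convex ℝ (interior K))
    {c : ℝ} (hc0 : lam 0 ≤ c) (hc : ∀ i ≠ 0, c ≤ lam i) {u : EuclideanSpace ℝ (Fin n)}
    (hu : ∀ x, ⟪u, x⟫ ^ 2 = ⟪v 0, x⟫ ^ 2) (hsgn : ∀ x ∈ sublevel A K c, 0 ≤ ⟪u, x⟫) :
    Convex ℝ (sublevel A K c) := by
  set u' := √(c - lam 0) • u
  have hu' : ∀ x, ⟪u', x⟫ ^ 2 = (c - lam 0) * ⟪v 0, x⟫ ^ 2 := fun x => by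
    rw [real_inner_smul_left, mul_pow, Real.sq_sqrt (sub_nonneg.2 hc0), hu]
  have hcone := convex_setOf_sum_mul_inner_sq_le (univ.erase 0) v
    (w := fun i => lam i - c) (fun i hi => sub_nonneg.2 (hc i (ne_of_mem_erase hi))) u'
  convert hK.inter hcone using 1
  ext x
  simp only [Set.mem_inter_iff, Set.mem_ofPred_eq, hu', ← sum_sub_mul_inner_sq_nonpos_iff]
  refine ⟨fun hx => ?_, fun hx => (mem_sublevel_iff hv heig).2 ⟨hx.1, hx.2.1⟩⟩
  obtain ⟨hxK, hq⟩ := (mem_sublevel_iff hv heig).1 hx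
  refine ⟨hxK, hq, ?_⟩
  rw [real_inner_smul_left]
  exact mul_nonneg (Real.sqrt_nonneg _) (hsgn x hx)

lemma exists_mem_sublevel_lt (hv : Orthonormal ℝ v)
    (heig : ∀ i, Matrix.toEuclideanLin A (v i) = lam i • v i) {c : ℝ} (h0c : lam 0 < c)
    {x : EuclideanSpace ℝ (Fin n)} (hx : x ∈ sublevel A K c) {s : ℝ}
    (hs : 0 < s * ⟪v 0, x⟫) : ∃ c' < c, ∃ x' ∈ sublevel A K c', 0 < s * ⟪v 0, x'⟫ := by
  set a := ⟪v 0, x⟫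
  obtain ⟨hxK, hq⟩ := (mem_sublevel_iff hv heig).1 hx
  have hcont : Continuous fun δ : ℝ => x + (δ * a) • v 0 := by fun_prop
  obtain ⟨δ, hδK, hδ⟩ : ∃ δ : ℝ, x + (δ * a) • v 0 ∈ interior K ∧ 0 < δ :=
    (((hcont.tendsto' 0 x (by simp)).eventually (isOpen_interior.mem_nhds hxK)).filter_mono
      nhdsWithin_le_nhds |>.and self_mem_nhdsWithin).exists (f := 𝓝[>] 0)
  have ha : 0 < a ^ 2 := by
    have : a ≠ 0 := by rintro h; simp [h] at hs
    positivity
  have hq' : quadForm A (x + (δ * a) • v 0) < c * ‖x + (δ * a) • v 0‖ ^ 2 := by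
    rw [← sub_neg, quadForm_sub_mul_norm_sq hv heig, sum_sub_mul_inner_add_smul_sq hv]
    nlinarith [mul_pos hδ ha, mul_pos (mul_pos hδ hδ) ha]
  obtain ⟨c', hc', hx'⟩ := exists_lt_mem_sublevel hδK hq'
  refine ⟨c', hc', _, hx', ?_⟩
  rw [inner_add_right, real_inner_smul_right, real_inner_self_eq_norm_sq, hv.1 0]
  nlinarith

lemma mem_dualCone_union_neg_of_convex (hv : Orthonormal ℝ v)
    (heig : ∀ i, Matrix.toEuclideanLin A (v i) = lam i • v i) (hmono : Monotone lam)
    (h01 : lam 0 < lam 1) (hK0 : 0 ∉ interior K)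
    (hconv : ∀ c < lam 1, Convex ℝ (sublevel A K c)) :
    v 0 ∈ dualCone (sublevel A K (lam 1)) ∪ -dualCone (sublevel A K (lam 1)) := by
  by_contra h
  simp only [Set.mem_union, Set.mem_neg, dualCone, Set.mem_ofPred_eq, not_or, not_forall,
    not_le, inner_neg_left, neg_neg_iff_pos] at h
  obtain ⟨⟨x, hx, hx0⟩, ⟨y, hy, hy0⟩⟩ := h
  obtain ⟨c₁, hc₁, x', hx', hx'0⟩ :=
    exists_mem_sublevel_lt hv heig h01 hx (s := -1) (by linarith)
  obtain ⟨c₂, hc₂, y', hy', hy'0⟩ :=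
    exists_mem_sublevel_lt hv heig h01 hy (s := 1) (by linarith)
  have hc : max c₁ c₂ < lam 1 := max_lt hc₁ hc₂
  obtain ⟨z, hz, hz0⟩ : ∃ z ∈ sublevel A K (max c₁ c₂), ⟪v 0, z⟫ = 0 :=
    (hconv _ hc).isPreconnected.intermediate_value
      (sublevel_mono (le_max_left _ _) hx') (sublevel_mono (le_max_right _ _) hy')
      (by fun_prop : Continuous fun z => ⟪v 0, z⟫).continuousOn ⟨by linarith, by linarith⟩
  obtain ⟨hzK, hq⟩ := (mem_sublevel_iff hv heig).1 hz
  refine hK0 (eq_zero_of_sum_sub_mul_inner_sq_nonpos hv (fun i hi => ?_) hq ▸ hzK)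
  have hi0 : i ≠ 0 := by rintro rfl; exact hi hz0
  exact hc.trans_le (hmono (Fin.one_le_of_ne_zero hi0))

lemma convex_sublevel_of_mem_dualCone (hv : Orthonormal ℝ v)
    (heig : ∀ i, Matrix.toEuclideanLin A (v i) = lam i • v i)
    (hmono : Monotone lam) (hK : Convex ℝ (interior K)) (hK0 : 0 ∉ interior K)
    (hd : v 0 ∈ dualCone (sublevel A K (lam 1)) ∪ -dualCone (sublevel A K (lam 1))) {c : ℝ}
    (hc : c ∉ Set.Ioo (lam 1) (lam ⟨n - 1, n.sub_one_lt (NeZero.ne n)⟩)) :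
    Convex ℝ (sublevel A K c) := by
  rcases lt_or_ge c (lam 0) with hc0 | hc0
  · rw [sublevel_eq_empty hv heig hK0 fun i => hc0.trans_le (hmono (Fin.zero_le i))]
    exact convex_empty
  rcases le_or_gt c (lam 1) with hc1 | hc1
  · have hci : ∀ i ≠ 0, c ≤ lam i := fun i hi => hc1.trans (hmono (Fin.one_le_of_ne_zero hi))
    have hsub : sublevel A K c ⊆ sublevel A K (lam 1) := sublevel_mono hc1
    rcases hd with hd | hd
    · exact convex_sublevel_of_forall_inner_nonneg hv heig hK hc0 hci (fun _ => rfl)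
        fun x hx => hd x (hsub hx)
    · exact convex_sublevel_of_forall_inner_nonneg hv heig hK hc0 hci (u := -v 0)
        (fun x => by rw [inner_neg_left, neg_sq]) fun x hx => hd x (hsub hx)
  · have hlast : lam ⟨n - 1, n.sub_one_lt (NeZero.ne n)⟩ ≤ c :=
      not_lt.1 fun h => hc ⟨hc1, h⟩
    have hle : ∀ i, lam i ≤ c := fun i =>
      (hmono (Fin.le_def.2 (Nat.le_sub_one_of_lt i.2))).trans hlast
    rw [sublevel_eq_interior hv heig hle]
    exact hK

end EigenCoordinates

/-- Lemma 3 of the paper: the sublevel sets `[φ_A ≤ c]` are convex for all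
`c ∉ (λ₂, λₙ)` iff `v¹ ∈ W* ∪ (-W*)`, where `W = (L_{λ₂} ∪ -L_{λ₂}) ∩ int K`. -/
theorem stmt5 (n : ℕ) [NeZero n] (hn : 2 ≤ n)
    (K : Set (EuclideanSpace ℝ (Fin n))) (hK : IsProperCone K)
    (A : Matrix (Fin n) (Fin n) ℝ)
    (v : Fin n → EuclideanSpace ℝ (Fin n)) (hv : Orthonormal ℝ v)
    (lam : Fin n → ℝ) (heig : ∀ i, Matrix.toEuclideanLin A (v i) = lam i • v i)
    (hmono : Monotone lam) (h12 : lam 0 < lam 1) :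
    let L := ellipCone v (fun i => (lam i - lam 1) / (lam 1 - lam 0))
    let W := (L ∪ -L) ∩ interior K
    ((∀ c : ℝ, c ∉ Set.Ioo (lam 1) (lam ⟨n - 1, by omega⟩) → Convex ℝ (sublevel A K c)) ↔
      v 0 ∈ dualCone W ∪ -dualCone W) := by
  intro L W
  obtain ⟨-, hKconv, -, hKpointed, -⟩ := hK
  have hK0 := zero_notMem_interior_of_inter_neg_subset hKpointed
  rw [show W = sublevel A K (lam 1) from
    ellipCone_union_neg_inter_interior_eq_sublevel hv heig h12]
  exact ⟨fun hconv => mem_dualCone_union_neg_of_convex hv heig hmono h12 hK0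
      fun c hc => hconv c fun h => lt_asymm h.1 hc,
    fun hd c hc => convex_sublevel_of_mem_dualCone hv heig hmono hKconv.interior hK0 hd hc⟩
end

section
/- Let n ≥ 3 and let B ∈ ℝ^{n×n} be a symmetric matrix whose eigenvalues μ₁ ≤ μ₂ ≤ ⋯ ≤ μₙ (counted with multiplicity) satisfy μ₂ < 0 < μₙ (so B has at least two negative eigenvalues, counted with multiplicity, and at least one positive eigenvalue). Then for every vector x̄ ∈ ℝⁿ \ {0} with B x̄ ≠ 0 and ⟨B x̄, x̄⟩ = 0, and every δ > 0, the set Ξ(B, x̄, δ) = {x ∈ ℝⁿ : ‖x − x̄‖ ≤ δ and ⟨Bx, x⟩ ≤ 0} is not convex. -/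
open scoped RealInnerProductSpace

/-!
Push `x̄` slightly along `w = B x̄` to `m = x̄ + t w`: since `⟨B x̄, x̄⟩ = 0`, the form takes the
value `⟨B m, m⟩ = 2 t ‖w‖² + t² ⟨B w, w⟩`, which is positive but as small as we like. The plane
spanned by two orthonormal eigenvectors with eigenvalues `≤ μ₂ < 0` contains a direction `h`
orthogonal to `B m`, and on that plane the form is at most `μ₂ ‖·‖²`. Hence
`⟨B(m ± h), m ± h⟩ = ⟨B m, m⟩ + ⟨B h, h⟩ ≤ 0` for a suitable length of `h`, so `m ± h` lie in
`Ξ(B, x̄, δ)` while their midpoint `m` does not.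
-/

open Filter Topology

section

variable {E : Type*} [NormedAddCommGroup E] [InnerProductSpace ℝ E] {T : E →ₗ[ℝ] E}

theorem LinearMap.IsSymmetric.inner_map_add_add (hT : T.IsSymmetric) (x y : E) :
    ⟪T (x + y), x + y⟫ = ⟪T x, x⟫ + 2 * ⟪T x, y⟫ + ⟪T y, y⟫ := by
  have : ⟪T y, x⟫ = ⟪T x, y⟫ := by rw [hT, real_inner_comm]
  rw [map_add, inner_add_left, inner_add_right, inner_add_right, this]
  ring

theorem inner_map_smul_smul (T : E →ₗ[ℝ] E) (t : ℝ) (x : E) :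
    ⟪T (t • x), t • x⟫ = t ^ 2 * ⟪T x, x⟫ := by
  rw [map_smul, real_inner_smul_left, real_inner_smul_right]
  ring

theorem inner_map_sum_le_of_orthonormal_eigenvectors {ι : Type*} [Fintype ι] {e : ι → E}
    (he : Orthonormal ℝ e) {μ : ι → ℝ} (heig : ∀ i, T (e i) = μ i • e i) {c : ℝ}
    (hc : ∀ i, μ i ≤ c) (a : ι → ℝ) :
    ⟪T (∑ i, a i • e i), ∑ i, a i • e i⟫ ≤ c * ‖∑ i, a i • e i‖ ^ 2 := by
  have hTa : T (∑ i, a i • e i) = ∑ i, (a i * μ i) • e i := by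
    simp only [map_sum, map_smul, heig, smul_smul]
  rw [hTa, ← real_inner_self_eq_norm_sq, he.inner_sum, he.inner_sum, Finset.mul_sum]
  refine Finset.sum_le_sum fun i _ => ?_
  simp only [conj_trivial]
  nlinarith [hc i, mul_self_nonneg (a i)]

theorem exists_ne_zero_inner_eq_zero_of_orthonormal_eigenvectors {ι : Type*} [Fintype ι]
    (hι : 1 < Fintype.card ι) {e : ι → E}
    (he : Orthonormal ℝ e) {μ : ι → ℝ} (heig : ∀ i, T (e i) = μ i • e i) {c : ℝ}
    (hc : ∀ i, μ i ≤ c) (v : E) :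
    ∃ h, h ≠ 0 ∧ ⟪v, h⟫ = 0 ∧ ⟪T h, h⟫ ≤ c * ‖h‖ ^ 2 := by
  set f := (innerₛₗ ℝ v).comp (Fintype.linearCombination ℝ e)
  have hker : LinearMap.ker f ≠ ⊥ :=
    LinearMap.ker_ne_bot_of_finrank_lt (by simpa using hι)
  obtain ⟨a, ha, ha0⟩ := (Submodule.ne_bot_iff _).mp hker
  refine ⟨∑ i, a i • e i, fun h0 => ha0 ?_, ?_,
    inner_map_sum_le_of_orthonormal_eigenvectors he heig hc a⟩
  · funext i
    exact Fintype.linearIndependent_iff.mp he.linearIndependent a h0 i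
  · simpa [f, Fintype.linearCombination_apply] using ha

theorem eventually_quadratic_pos_and_lt {α β η : ℝ} (hα : 0 < α) (hη : 0 < η) :
    ∀ᶠ t in 𝓝[>] (0 : ℝ), 0 < 2 * t * α + t ^ 2 * β ∧ 2 * t * α + t ^ 2 * β < η := by
  have hlin : Tendsto (fun t : ℝ => 2 * α + t * β) (𝓝[>] 0) (𝓝 (2 * α)) :=
    ((continuous_const.add (continuous_id.mul continuous_const)).tendsto' 0 _
      (by simp)).mono_left nhdsWithin_le_nhds
  have hquad : Tendsto (fun t : ℝ => 2 * t * α + t ^ 2 * β) (𝓝[>] 0) (𝓝 0) :=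
    ((by fun_prop : Continuous fun t : ℝ => 2 * t * α + t ^ 2 * β).tendsto' 0 _
      (by simp)).mono_left nhdsWithin_le_nhds
  filter_upwards [self_mem_nhdsWithin, hlin.eventually_const_lt (by positivity : (0 : ℝ) < 2 * α),
    hquad.eventually_lt_const hη] with t (ht : 0 < t) hpos hlt
  exact ⟨by nlinarith, hlt⟩

theorem LinearMap.IsSymmetric.not_convex_closedBall_inter_nonpos (hT : T.IsSymmetric)
    {ι : Type*} [Fintype ι] (hι : 1 < Fintype.card ι) {e : ι → E} (he : Orthonormal ℝ e)
    {μ : ι → ℝ} (heig : ∀ i, T (e i) = μ i • e i) {c : ℝ} (hc : ∀ i, μ i ≤ c) (hc0 : c < 0)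
    {xbar : E} (hTx : T xbar ≠ 0) (hqx : ⟪T xbar, xbar⟫ = 0) {δ : ℝ} (hδ : 0 < δ) :
    ¬ Convex ℝ {x | ‖x - xbar‖ ≤ δ ∧ ⟪T x, x⟫ ≤ 0} := by
  intro hconv
  set w := T xbar
  set r := δ / 2 with hr
  have hw : 0 < ‖w‖ := norm_pos_iff.mpr hTx
  obtain ⟨t, ⟨hqm_pos, hqm_lt⟩, ⟨ht, htr⟩⟩ :=
    ((eventually_quadratic_pos_and_lt (β := ⟪T w, w⟫) (pow_pos hw 2)
      (mul_pos (neg_pos.mpr hc0) (pow_pos (half_pos hδ) 2))).and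
      (Ioo_mem_nhdsGT (div_pos (half_pos hδ) hw))).exists
  rw [← hr] at hqm_lt htr
  set m := xbar + t • w
  have hqm : ⟪T m, m⟫ = 2 * t * ‖w‖ ^ 2 + t ^ 2 * ⟪T w, w⟫ := by
    rw [hT.inner_map_add_add, hqx, inner_map_smul_smul, real_inner_smul_right,
      real_inner_self_eq_norm_sq]
    ring
  obtain ⟨h₀, hh₀, horth₀, hqh₀⟩ :=
    exists_ne_zero_inner_eq_zero_of_orthonormal_eigenvectors hι he heig hc (T m)
  have hh₀' : 0 < ‖h₀‖ := norm_pos_iff.mpr hh₀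
  set h := (r / ‖h₀‖) • h₀
  have hh : ‖h‖ = r := by
    rw [norm_smul, Real.norm_of_nonneg (by positivity), div_mul_cancel₀ _ hh₀'.ne']
  have horth : ⟪T m, h⟫ = 0 := by rw [real_inner_smul_right, horth₀, mul_zero]
  have hqh : ⟪T h, h⟫ ≤ c * r ^ 2 := by
    rw [inner_map_smul_smul]
    calc (r / ‖h₀‖) ^ 2 * ⟪T h₀, h₀⟫ ≤ (r / ‖h₀‖) ^ 2 * (c * ‖h₀‖ ^ 2) := by gcongr
      _ = c * r ^ 2 := by field_simp
  have hmem : ∀ y, ⟪T m, y⟫ = 0 → ‖y‖ = r → ⟪T y, y⟫ ≤ c * r ^ 2 →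
      m + y ∈ {x | ‖x - xbar‖ ≤ δ ∧ ⟪T x, x⟫ ≤ 0} := by
    intro y hy hyr hqy
    refine ⟨?_, ?_⟩
    · calc ‖m + y - xbar‖ = ‖t • w + y‖ := by
            simp only [m, add_sub_right_comm, sub_self, zero_add]
        _ ≤ t * ‖w‖ + r :=
          (norm_add_le _ _).trans_eq (by rw [norm_smul, Real.norm_of_nonneg ht.le, hyr])
        _ ≤ δ := by rw [lt_div_iff₀ hw] at htr; linarith
    · rw [hT.inner_map_add_add, hy, hqm]
      linarith
  have hmid := hconv.midpoint_mem (hmem h horth hh hqh)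
    (hmem (-h) (by rw [inner_neg_right, horth, neg_zero]) (by rw [norm_neg, hh])
      (by rw [map_neg, inner_neg_neg]; exact hqh))
  rw [← sub_eq_add_neg, midpoint_add_sub] at hmid
  linarith [hmid.2]

end

/-- Lemma 4 of the paper: if `B` is symmetric with `μ₁ ≤ μ₂ < 0 < μₙ`, then for any
`x̄ ≠ 0` with `B x̄ ≠ 0` and `⟨B x̄, x̄⟩ = 0`, and any `δ > 0`, the set
`Ξ(B, x̄, δ) = {x : ‖x - x̄‖ ≤ δ, ⟨B x, x⟩ ≤ 0}` is not convex. -/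
theorem stmt8 (n : ℕ) [NeZero n] (hn : 3 ≤ n)
    (B : Matrix (Fin n) (Fin n) ℝ) (hB : B.IsSymm)
    (u : Fin n → EuclideanSpace ℝ (Fin n)) (hu : Orthonormal ℝ u)
    (mu : Fin n → ℝ) (heig : ∀ i, Matrix.toEuclideanLin B (u i) = mu i • u i)
    (hmono : Monotone mu) (hneg : mu 1 < 0)
    (xbar : EuclideanSpace ℝ (Fin n))
    (hBx : Matrix.toEuclideanLin B xbar ≠ 0) (hqx : quadForm B xbar = 0)
    (δ : ℝ) (hδ : 0 < δ) :
    ¬ Convex ℝ {x : EuclideanSpace ℝ (Fin n) | ‖x - xbar‖ ≤ δ ∧ quadForm B x ≤ 0} := by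
  have h2n : 2 ≤ n := by omega
  have hle : ∀ i : Fin 2, Fin.castLE h2n i ≤ 1 := by
    intro i
    rw [Fin.le_def, Fin.val_castLE, Fin.val_one', Nat.mod_eq_of_lt (by omega)]
    exact Nat.le_of_lt_succ i.isLt
  exact (Matrix.isSymmetric_toEuclideanLin_iff.mpr (Matrix.isHermitian_iff_isSymm.mpr hB))
    |>.not_convex_closedBall_inter_nonpos (by simp) (hu.comp _ (Fin.castLE_injective h2n))
      (fun i => heig _) (fun i => hmono (hle i)) hneg hBx hqx hδ
end

section
/- Let n ≥ 3, let K ⊆ ℝⁿ be a proper self-dual cone (K = K*), let A ∈ ℝ^{n×n} be symmetric with at least two distinct eigenvalues, and let {v¹, …, vⁿ} be an orthonormal system of eigenvectors of A with A vⁱ = λᵢ vⁱ and λ₁ ≤ λ₂ ≤ ⋯ ≤ λₙ. Suppose v¹ ∈ K and that the function x ↦ ⟨Ax, x⟩ is not constant on S^{n−1} ∩ K. Then the sublevel set [φ_A ≤ c] = {x ∈ int(K) : ⟨Ax, x⟩ ≤ c‖x‖²} is convex for every c ∈ ℝ (equivalently, q_A is spherically quasi-convex) if and only if λ₁ < λ₂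 (the smallest eigenvalue has multiplicity one) and λ₂Iₙ − A is K-copositive. -/
open scoped RealInnerProductSpace

/-!
Write `q_A(x) - c‖x‖² = ∑ᵢ (λᵢ - c)⟨vᵢ, x⟩²` (indices shifted by one: `λ₁ = lam 0`).

If `λ₂Iₙ - A` is `K`-copositive, the sublevel set `[φ_A ≤ c]` is empty for
`c < λ₁` and all of `int K` for `c ≥ λ₂`. For `λ₁ ≤ c < λ₂` only the `v¹`-term is negative, and
`⟨v¹, x⟩ ≥ 0` on `K = K*`, so `[φ_A ≤ c]` is `int K` cut with the second-order cone
`‖F x‖ ≤ √(c - λ₁) ⟨v¹, x⟩`, where `F x = (√(λᵢ - c) ⟨vᵢ, x⟩)ᵢ`.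

Conversely, convex sublevel sets make `φ_A` quasi-convex on `int K`. If `φ_A(x) > λ₂` at an interior
point, take `d ≠ 0` in `span(v¹, v²)` orthogonal to `A x - φ_A(x) x`; since `q_A(d) ≤ λ₂‖d‖²`,
`φ_A(x ± τd) < φ_A(x)` for small `τ ≠ 0`, which quasi-convexity forbids at the midpoint `x`.
So `q_A ≤ λ₂‖·‖²` on `int K`, hence on `K`: this is copositivity, and `λ₁ = λ₂` would make `q_A`
constant on `S^{n-1} ∩ K`.
-/

open Filter Topology

section InnerProductSpace

variable {ι E : Type*} [Fintype ι] [NormedAddCommGroup E] [InnerProductSpace ℝ E]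

theorem Orthonormal.sum_inner_mul_inner_of_card_eq_finrank [FiniteDimensional ℝ E] {v : ι → E}
    (hv : Orthonormal ℝ v) (hcard : Fintype.card ι = Module.finrank ℝ E) (x y : E) :
    ∑ i, ⟪x, v i⟫ * ⟪v i, y⟫ = ⟪x, y⟫ := by
  simpa using (OrthonormalBasis.mk hv
    (hv.linearIndependent.span_eq_top_of_card_eq_finrank' hcard).ge).sum_inner_mul_inner x y

theorem Orthonormal.sum_inner_sq_of_card_eq_finrank [FiniteDimensional ℝ E] {v : ι → E}
    (hv : Orthonormal ℝ v) (hcard : Fintype.card ι = Module.finrank ℝ E) (x : E) :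
    ∑ i, ⟪v i, x⟫ ^ 2 = ‖x‖ ^ 2 := by
  rw [← real_inner_self_eq_norm_sq, ← hv.sum_inner_mul_inner_of_card_eq_finrank hcard x x]
  simp_rw [real_inner_comm x, sq]

noncomputable def weightedCoords (v : ι → E) (w : ι → ℝ) : E →ₗ[ℝ] EuclideanSpace ℝ ι :=
  (WithLp.linearEquiv 2 ℝ (ι → ℝ)).symm.toLinearMap ∘ₗ LinearMap.pi fun i => w i • innerₗ E (v i)

theorem norm_weightedCoords_sq (v : ι → E) (w : ι → ℝ) (x : E) :
    ‖weightedCoords v w x‖ ^ 2 = ∑ i, (w i * ⟪v i, x⟫) ^ 2 := by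
  simp [weightedCoords, EuclideanSpace.real_norm_sq_eq]

theorem convex_setOf_norm_le_inner {F : Type*} [NormedAddCommGroup F] [NormedSpace ℝ F]
    (T : E →ₗ[ℝ] F) (u : E) : Convex ℝ {x | ‖T x‖ ≤ ⟪u, x⟫} := by
  have h : ConvexOn ℝ Set.univ fun x => ‖T x‖ - ⟪u, x⟫ :=
    ((convexOn_norm convex_univ).comp_linearMap T).sub ((innerₗ E u).concaveOn convex_univ)
  simpa [sub_nonpos] using h.convex_le 0

end InnerProductSpace

theorem zero_notMem_interior_of_pointed {E : Type*} [AddCommGroup E] [TopologicalSpace E]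
    [IsTopologicalAddGroup E] [Module ℝ E] [ContinuousSMul ℝ E] [Nontrivial E]
    {K : Set E} (hK : K ∩ -K ⊆ {0}) : (0 : E) ∉ interior K := by
  intro h
  have hK0 : K ∈ 𝓝 (0 : E) := mem_interior_iff_mem_nhds.1 h
  have hsingle : ({0} : Set E) ∈ 𝓝 0 :=
    mem_of_superset (inter_mem hK0 (neg_mem_nhds_zero E hK0)) hK
  exact not_isOpen_singleton (0 : E) (isOpen_iff_mem_nhds.2 fun x hx => hx ▸ hsingle)

section QuadForm

variable {n : ℕ} {A : Matrix (Fin n) (Fin n) ℝ} {v : Fin n → EuclideanSpace ℝ (Fin n)}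
  {lam : Fin n → ℝ}

local notation "E" => EuclideanSpace ℝ (Fin n)

theorem Matrix.IsSymm.inner_toEuclideanLin (hA : A.IsSymm) (x y : E) :
    ⟪Matrix.toEuclideanLin A x, y⟫ = ⟪x, Matrix.toEuclideanLin A y⟫ :=
  Matrix.isSymmetric_toEuclideanLin_iff.2 (Matrix.isHermitian_iff_isSymm.2 hA) x y

theorem continuous_quadForm (A : Matrix (Fin n) (Fin n) ℝ) : Continuous (quadForm A) :=
  (Matrix.toEuclideanLin A).continuous_of_finiteDimensional.inner continuous_id

theorem quadForm_smul_one_sub (A : Matrix (Fin n) (Fin n) ℝ) (μ : ℝ) (x : E) :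
    quadForm (μ • 1 - A) x = μ * ‖x‖ ^ 2 - quadForm A x := by
  simp [quadForm, inner_sub_left, real_inner_smul_left]

theorem quadForm_add_smul_sub_mul_norm_sq (hA : A.IsSymm) (φ : ℝ) (x d : E) (τ : ℝ) :
    quadForm A (x + τ • d) - φ * ‖x + τ • d‖ ^ 2 =
      quadForm A x - φ * ‖x‖ ^ 2 + 2 * τ * ⟪Matrix.toEuclideanLin A x - φ • x, d⟫ +
        τ ^ 2 * (quadForm A d - φ * ‖d‖ ^ 2) := by
  have hsymm : ⟪Matrix.toEuclideanLin A d, x⟫ = ⟪Matrix.toEuclideanLin A x, d⟫ := by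
    rw [hA.inner_toEuclideanLin, real_inner_comm]
  simp only [quadForm, map_add, map_smul, inner_add_left, inner_add_right, inner_sub_left,
    real_inner_smul_left, real_inner_smul_right, hsymm, ← real_inner_self_eq_norm_sq,
    real_inner_comm x d]
  ring

theorem quadForm_eq_sum (hA : A.IsSymm) (hv : Orthonormal ℝ v)
    (heig : ∀ i, Matrix.toEuclideanLin A (v i) = lam i • v i) (x : E) :
    quadForm A x = ∑ i, lam i * ⟪v i, x⟫ ^ 2 := by
  rw [quadForm, ← hv.sum_inner_mul_inner_of_card_eq_finrank (by simp)]
  simp_rw [hA.inner_toEuclideanLin, heig, real_inner_smul_right, real_inner_comm x]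
  ring_nf

theorem mul_norm_sq_le_quadForm [NeZero n] (hA : A.IsSymm) (hv : Orthonormal ℝ v)
    (heig : ∀ i, Matrix.toEuclideanLin A (v i) = lam i • v i) (hmono : Monotone lam) (x : E) :
    lam 0 * ‖x‖ ^ 2 ≤ quadForm A x := by
  rw [quadForm_eq_sum hA hv heig, ← hv.sum_inner_sq_of_card_eq_finrank (by simp), Finset.mul_sum]
  gcongr with i
  exact hmono (Fin.zero_le i)

theorem exists_ne_zero_inner_eq_zero_quadForm_le (hv : Orthonormal ℝ v)
    (heig : ∀ i, Matrix.toEuclideanLin A (v i) = lam i • v i) {i j : Fin n} (hij : i ≠ j)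
    (hle : lam i ≤ lam j) (g : E) :
    ∃ d ≠ 0, ⟪g, d⟫ = 0 ∧ quadForm A d ≤ lam j * ‖d‖ ^ 2 := by
  obtain ⟨a, b, hab, hg⟩ : ∃ a b : ℝ, (a ≠ 0 ∨ b ≠ 0) ∧ a * ⟪g, v i⟫ + b * ⟪g, v j⟫ = 0 := by
    by_cases h : ⟪g, v i⟫ = 0
    · exact ⟨1, 0, by simp, by simp [h]⟩
    · exact ⟨⟪g, v j⟫, -⟪g, v i⟫, by simp [h], by ring⟩
  have hinner : ∀ k l, ⟪v k, v l⟫ = if k = l then 1 else 0 := orthonormal_iff_ite.1 hv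
  have hnorm : ‖a • v i + b • v j‖ ^ 2 = a ^ 2 + b ^ 2 := by
    simp only [← real_inner_self_eq_norm_sq, inner_add_left, inner_add_right,
      real_inner_smul_left, real_inner_smul_right, hinner, hij, hij.symm, if_true, if_false]
    ring
  refine ⟨a • v i + b • v j, fun h0 => ?_, ?_, ?_⟩
  · rw [h0, norm_zero] at hnorm
    rcases hab with ha | hb
    · exact ha (by nlinarith [sq_nonneg b])
    · exact hb (by nlinarith [sq_nonneg a])
  · simp only [inner_add_right, real_inner_smul_right]; linarith
  · simp only [quadForm, map_add, map_smul, heig, inner_add_left, inner_add_right,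
      real_inner_smul_left, real_inner_smul_right, hinner, hij, hij.symm, if_true, if_false]
    rw [hnorm]
    nlinarith [mul_le_mul_of_nonneg_right hle (sq_nonneg a)]

theorem quadForm_sub_mul_norm_sq_eq [NeZero n] (hA : A.IsSymm) (hv : Orthonormal ℝ v)
    (heig : ∀ i, Matrix.toEuclideanLin A (v i) = lam i • v i) {c : ℝ} (hc0 : lam 0 ≤ c)
    (hc : ∀ i ≠ 0, c ≤ lam i) (x : E) :
    quadForm A x - c * ‖x‖ ^ 2 =
      ‖weightedCoords v (fun i => √(lam i - c)) x‖ ^ 2 - (c - lam 0) * ⟪v 0, x⟫ ^ 2 := by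
  -- the `i = 0` weight is `√(lam 0 - c) = 0`, `Real.sqrt` being `0` on nonpositive reals
  have hdiff : ∑ i, ((lam i - c) * ⟪v i, x⟫ ^ 2 - (√(lam i - c) * ⟪v i, x⟫) ^ 2) =
      (lam 0 - c) * ⟪v 0, x⟫ ^ 2 := by
    rw [Finset.sum_eq_single 0 (fun i _ hi => by
        rw [mul_pow, Real.sq_sqrt (sub_nonneg.2 (hc i hi)), sub_self]) (by simp),
      Real.sqrt_eq_zero'.2 (sub_nonpos.2 hc0)]
    ring
  rw [quadForm_eq_sum hA hv heig, ← hv.sum_inner_sq_of_card_eq_finrank (by simp),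
    norm_weightedCoords_sq, Finset.mul_sum, ← Finset.sum_sub_distrib]
  rw [Finset.sum_sub_distrib] at hdiff
  simp only [sub_mul] at hdiff ⊢
  linarith

noncomputable def rayleigh (A : Matrix (Fin n) (Fin n) ℝ) (x : E) : ℝ :=
  quadForm A x / ‖x‖ ^ 2

theorem rayleigh_lt_of_quadForm_lt {φ : ℝ} {x : E} (h : quadForm A x < φ * ‖x‖ ^ 2) :
    rayleigh A x < φ := by
  have hx : x ≠ 0 := by rintro rfl; simp [quadForm] at h
  exact (div_lt_iff₀ (by positivity)).2 h

theorem sublevel_eq_setOf_rayleigh_le {K : Set E} (h0 : (0 : E) ∉ interior K) (c : ℝ) :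
    sublevel A K c = {x | x ∈ interior K ∧ rayleigh A x ≤ c} := by
  ext x
  refine and_congr_right fun hx => (div_le_iff₀ ?_).symm
  have : x ≠ 0 := by rintro rfl; exact h0 hx
  positivity

theorem quadForm_le_of_quasiconvexOn_rayleigh {U : Set E} (hU : IsOpen U)
    (hq : QuasiconvexOn ℝ U (rayleigh A)) (hA : A.IsSymm) (hv : Orthonormal ℝ v)
    (heig : ∀ i, Matrix.toEuclideanLin A (v i) = lam i • v i) {i j : Fin n} (hij : i ≠ j)
    (hle : lam i ≤ lam j) {x : E} (hx : x ∈ U) : quadForm A x ≤ lam j * ‖x‖ ^ 2 := by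
  by_contra! hgt
  set φ := rayleigh A x
  have hx0 : x ≠ 0 := by rintro rfl; simp [quadForm] at hgt
  have hxφ : quadForm A x = φ * ‖x‖ ^ 2 := (div_mul_cancel₀ _ (by positivity)).symm
  have hjφ : lam j < φ := (lt_div_iff₀ (by positivity)).2 hgt
  obtain ⟨d, hd0, hgd, hdq⟩ :=
    exists_ne_zero_inner_eq_zero_quadForm_le hv heig hij hle (Matrix.toEuclideanLin A x - φ • x)
  have hdφ : quadForm A d - φ * ‖d‖ ^ 2 < 0 := by
    nlinarith [mul_lt_mul_of_pos_right hjφ (by positivity : (0 : ℝ) < ‖d‖ ^ 2)]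
  have hlt : ∀ τ ≠ (0 : ℝ), rayleigh A (x + τ • d) < φ := fun τ hτ => by
    refine rayleigh_lt_of_quadForm_lt (sub_neg.1 ?_)
    rw [quadForm_add_smul_sub_mul_norm_sq hA, hxφ, hgd]
    nlinarith [pow_pos (sq_pos_of_ne_zero hτ) 1]
  have hline : Continuous fun τ : ℝ => x + τ • d := by fun_prop
  obtain ⟨ε, hε, hball⟩ := Metric.eventually_nhds_iff.1 <|
    (hline.tendsto' 0 x (by simp)).eventually (hU.mem_nhds hx)
  have hplus : x + (ε / 2) • d ∈ U := hball (by simp [abs_of_pos hε]; linarith)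
  have hminus : x + -(ε / 2) • d ∈ U := hball (by simp [abs_of_pos hε]; linarith)
  have hmid := (quasiconvexOn_iff_le_max.1 hq).2 hplus hminus (by norm_num : (0 : ℝ) ≤ 1 / 2)
    (by norm_num : (0 : ℝ) ≤ 1 / 2) (by norm_num)
  rw [show (1 / 2 : ℝ) • (x + (ε / 2) • d) + (1 / 2 : ℝ) • (x + -(ε / 2) • d) = x by module]
    at hmid
  exact hmid.not_gt (max_lt (hlt _ (by positivity)) (hlt _ (by linarith)))

theorem quadForm_le_of_convex_sublevel {K : Set E} (hK : Convex ℝ K)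
    (hKint : (interior K).Nonempty) (h0 : (0 : E) ∉ interior K)
    (hconv : ∀ c, Convex ℝ (sublevel A K c)) (hA : A.IsSymm) (hv : Orthonormal ℝ v)
    (heig : ∀ i, Matrix.toEuclideanLin A (v i) = lam i • v i) {i j : Fin n} (hij : i ≠ j)
    (hle : lam i ≤ lam j) : ∀ x ∈ K, quadForm A x ≤ lam j * ‖x‖ ^ 2 := by
  have hq : QuasiconvexOn ℝ (interior K) (rayleigh A) := fun c => by
    simpa only [sublevel_eq_setOf_rayleigh_le h0] using hconv c
  have hint : ∀ x ∈ interior K, quadForm A x ≤ lam j * ‖x‖ ^ 2 := fun x hx =>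
    quadForm_le_of_quasiconvexOn_rayleigh isOpen_interior hq hA hv heig hij hle hx
  have hclosed : IsClosed {x | quadForm A x ≤ lam j * ‖x‖ ^ 2} :=
    isClosed_le (continuous_quadForm A) (by fun_prop)
  exact fun x hx => closure_minimal hint hclosed
    (hK.closure_interior_eq_closure_of_nonempty_interior hKint ▸ subset_closure hx)

theorem convex_sublevel_of_copositive [NeZero n] {K : Set E} (hK : Convex ℝ (interior K))
    (h0 : (0 : E) ∉ interior K) (hA : A.IsSymm) (hv : Orthonormal ℝ v)
    (heig : ∀ i, Matrix.toEuclideanLin A (v i) = lam i • v i) (hmono : Monotone lam)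
    (hpos : ∀ x ∈ interior K, 0 ≤ ⟪v 0, x⟫)
    (hcop : ∀ x ∈ interior K, 0 ≤ quadForm (lam 1 • 1 - A) x) (c : ℝ) :
    Convex ℝ (sublevel A K c) := by
  rcases lt_or_ge c (lam 0) with hc0 | hc0
  · convert convex_empty
    refine Set.eq_empty_of_forall_notMem fun x ⟨hx, hxc⟩ => h0 ?_
    have hlow := mul_norm_sq_le_quadForm hA hv heig hmono x
    have hx0 : ‖x‖ ^ 2 = 0 := by nlinarith [sq_nonneg ‖x‖]
    rw [sq_eq_zero_iff, norm_eq_zero] at hx0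
    exact hx0 ▸ hx
  rcases le_or_gt (lam 1) c with hc1 | hc1
  · convert hK using 1
    refine Set.sep_eq_self_iff_mem_true.2 fun x hx => ?_
    have := hcop x hx
    rw [quadForm_smul_one_sub, sub_nonneg] at this
    exact this.trans (by gcongr)
  · have hc : ∀ i ≠ 0, c ≤ lam i := fun i hi => hc1.le.trans (hmono (Fin.one_le_of_ne_zero hi))
    convert hK.inter (convex_setOf_norm_le_inner (weightedCoords v fun i => √(lam i - c))
      (√(c - lam 0) • v 0)) using 1
    ext x
    refine and_congr_right fun hx => ?_
    rw [Set.mem_ofPred_eq, ← sub_nonpos, quadForm_sub_mul_norm_sq_eq hA hv heig hc0 hc, sub_nonpos,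
      real_inner_smul_left, ← pow_le_pow_iff_left₀ (norm_nonneg _)
        (mul_nonneg (Real.sqrt_nonneg _) (hpos x hx)) two_ne_zero,
      mul_pow, Real.sq_sqrt (sub_nonneg.2 hc0)]

end QuadForm

/-- Theorem 1(iv) of the paper: for a proper self-dual cone `K`, a symmetric `A` with at
least two distinct eigenvalues, `v¹ ∈ K` and `q_A` not constant on `S^{n-1} ∩ K`,
all sublevel sets `[φ_A ≤ c]` are convex iff `λ₁ < λ₂` and `λ₂Iₙ - A` is `K`-copositive. -/
theorem stmt12 (n : ℕ) [NeZero n] (hn : 3 ≤ n)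
    (K : Set (EuclideanSpace ℝ (Fin n))) (hK : IsProperCone K) (hself : dualCone K = K)
    (A : Matrix (Fin n) (Fin n) ℝ) (hA : A.IsSymm)
    (v : Fin n → EuclideanSpace ℝ (Fin n)) (hv : Orthonormal ℝ v)
    (lam : Fin n → ℝ) (heig : ∀ i, Matrix.toEuclideanLin A (v i) = lam i • v i)
    (hmono : Monotone lam)
    (hv1 : v 0 ∈ K)
    (hnc : ¬ ∀ x ∈ K, ∀ y ∈ K, ‖x‖ = 1 → ‖y‖ = 1 → quadForm A x = quadForm A y) :
    (∀ c : ℝ, Convex ℝ (sublevel A K c)) ↔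
      (lam 0 < lam 1 ∧
        ∀ x ∈ K, 0 ≤ quadForm (lam 1 • (1 : Matrix (Fin n) (Fin n) ℝ) - A) x) := by
  obtain ⟨-, hKconv, -, hKpt, hKint⟩ := hK
  have h0 : (0 : EuclideanSpace ℝ (Fin n)) ∉ interior K := zero_notMem_interior_of_pointed hKpt
  have h01 : (0 : Fin n) ≠ 1 := by
    rw [Ne, Fin.ext_iff, Fin.val_zero, Fin.val_one', Nat.mod_eq_of_lt (by omega)]
    omega
  have hle01 : lam 0 ≤ lam 1 := hmono (Fin.zero_le 1)
  constructor
  · intro hconv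
    have hle := quadForm_le_of_convex_sublevel hKconv hKint h0 hconv hA hv heig h01 hle01
    refine ⟨hle01.lt_of_ne fun heq => hnc fun x hx y hy hx1 hy1 => ?_, fun x hx => ?_⟩
    · have hconst : ∀ z ∈ K, quadForm A z = lam 0 * ‖z‖ ^ 2 := fun z hz =>
        le_antisymm (heq ▸ hle z hz) (mul_norm_sq_le_quadForm hA hv heig hmono z)
      rw [hconst x hx, hconst y hy, hx1, hy1]
    · rw [quadForm_smul_one_sub, sub_nonneg]
      exact hle x hx
  · rintro ⟨-, hcop⟩
    refine convex_sublevel_of_copositive hKconv.interior h0 hA hv heig hmono (fun x hx => ?_)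
      (fun x hx => hcop x (interior_subset hx))
    have hxdual : x ∈ dualCone K := hself.symm ▸ interior_subset hx
    exact real_inner_comm x (v 0) ▸ hxdual (v 0) hv1
end

section
/- Let n ≥ 3, let K ⊆ ℝⁿ be a proper subdual cone, let A ∈ ℝ^{n×n} be symmetric, and let {v¹, …, vⁿ} be an orthonormal system of eigenvectors of A with A v¹ = λ v¹, A vʲ = μ vʲ for j = 2, …, n−1, and A vⁿ = η vⁿ, where λ < μ < η. Let p, q ∈ ℝⁿ be the Moreau decomposition of vⁿ with respect to K: p ∈ K, q ∈ K*, vⁿ = p − q and ⟨p, q⟩ = 0 (so p = P_K(vⁿ), q = P_{K*}(−vⁿ), and |vⁿ|^K = p + q). Assume v¹ − √((η − μ)/(μ − λ))·(p + q) ∈ K*. Then the sublevel set [φ_A ≤ c] = {x ∈ int(K) : ⟨Ax, x⟩ ≤ c‖x‖²} is convex for every c ∈ ℝ (i.e., q_A is spherically quasi-convex). -/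
open scoped RealInnerProductSpace

/-! In an orthonormal eigenbasis, `⟨Ax, x⟩ = μ‖x‖² + (λ - μ)⟨v¹, x⟩² + (η - μ)⟨vⁿ, x⟩²`.
For `x ∈ K ⊆ K*` both `⟨p, x⟩` and `⟨q, x⟩` are nonnegative, so `|⟨vⁿ, x⟩| ≤ ⟨p + q, x⟩`, and the
hypothesis on `v¹` yields `√(η - μ) |⟨vⁿ, x⟩| ≤ √(μ - λ) ⟨v¹, x⟩` on `K`. Hence for `c ≥ μ` the
sublevel set is all of `int K`, while for `c < μ` it is `int K` cut by the second-order cone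
`‖(√(μ - c) x, √(η - μ) ⟨vⁿ, x⟩)‖ ≤ √(μ - λ) ⟨v¹, x⟩`. -/

section SpectralForm

variable {ι E : Type*} [Fintype ι] [NormedAddCommGroup E] [InnerProductSpace ℝ E]

theorem OrthonormalBasis.inner_apply_self_eq_sum_of_eigenvectors (b : OrthonormalBasis ι ℝ E)
    (T : E →ₗ[ℝ] E) (ev : ι → ℝ) (hT : ∀ i, T (b i) = ev i • b i) (x : E) :
    ⟪T x, x⟫ = ∑ i, ev i * ⟪b i, x⟫ ^ 2 := by
  have hTx : T x = ∑ i, (ev i * ⟪b i, x⟫) • b i := by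
    conv_lhs => rw [← b.sum_repr' x]
    simp only [map_sum, map_smul, hT, smul_smul, mul_comm]
  simp only [hTx, sum_inner, real_inner_smul_left]
  exact Finset.sum_congr rfl fun i _ => by ring

theorem OrthonormalBasis.inner_apply_self_eq_of_three_eigenvalues [DecidableEq ι]
    (b : OrthonormalBasis ι ℝ E) (T : E →ₗ[ℝ] E) {i j : ι} (hij : i ≠ j) {lam mu eta : ℝ}
    (hi : T (b i) = lam • b i) (hj : T (b j) = eta • b j) (hk : ∀ k, k ≠ i → k ≠ j → T (b k) = mu • b k) (x : E) :
    ⟪T x, x⟫ = mu * ‖x‖ ^ 2 + (lam - mu) * ⟪b i, x⟫ ^ 2 + (eta - mu) * ⟪b j, x⟫ ^ 2 := by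
  let ev : ι → ℝ := fun k => mu + (if k = i then lam - mu else 0) + (if k = j then eta - mu else 0)
  have hT : ∀ k, T (b k) = ev k • b k := by
    intro k
    by_cases hki : k = i
    · subst hki; simp [ev, hi, hij]
    by_cases hkj : k = j
    · subst hkj; simp [ev, hj, hki]
    simp [ev, hk k hki hkj, hki, hkj]
  rw [b.inner_apply_self_eq_sum_of_eigenvectors T ev hT, ← b.sum_sq_inner_right x, Finset.mul_sum]
  simp [ev, add_mul, Finset.sum_add_distrib, ite_mul]

end SpectralForm

section ConeInequality

variable {n : ℕ} {K : Set (EuclideanSpace ℝ (Fin n))}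

theorem inner_sq_le_of_sub_smul_mem_dualCone (hsub : K ⊆ dualCone K)
    {p q u : EuclideanSpace ℝ (Fin n)} (hp : p ∈ K) (hq : q ∈ dualCone K) {t : ℝ} (ht : 0 ≤ t)
    (hu : u - t • (p + q) ∈ dualCone K) {x : EuclideanSpace ℝ (Fin n)} (hx : x ∈ K) :
    0 ≤ ⟪u, x⟫ ∧ t ^ 2 * ⟪p - q, x⟫ ^ 2 ≤ ⟪u, x⟫ ^ 2 := by
  have hpx : 0 ≤ ⟪p, x⟫ := hsub hp x hx
  have hqx : 0 ≤ ⟪q, x⟫ := hq x hx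
  have hux : t * (⟪p, x⟫ + ⟪q, x⟫) ≤ ⟪u, x⟫ := by
    have := hu x hx
    rw [inner_sub_left, real_inner_smul_left, inner_add_left] at this
    linarith
  have htpq : 0 ≤ t * (⟪p, x⟫ + ⟪q, x⟫) := by positivity
  rw [inner_sub_left]
  refine ⟨htpq.trans hux, ?_⟩
  calc t ^ 2 * (⟪p, x⟫ - ⟪q, x⟫) ^ 2 ≤ (t * (⟪p, x⟫ + ⟪q, x⟫)) ^ 2 := by
        nlinarith [mul_nonneg (sq_nonneg t) (mul_nonneg hpx hqx)]
    _ ≤ ⟪u, x⟫ ^ 2 := pow_le_pow_left₀ htpq hux 2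

end ConeInequality

theorem convex_setOf_sq_add_sq_le {E : Type*} [NormedAddCommGroup E] [InnerProductSpace ℝ E]
    {a b d : ℝ} (ha : 0 ≤ a) (hb : 0 ≤ b) (hd : 0 ≤ d) (u w : E) :
    Convex ℝ {x : E | a * ‖x‖ ^ 2 + b * ⟪w, x⟫ ^ 2 ≤ d * ⟪u, x⟫ ^ 2 ∧ 0 ≤ ⟪u, x⟫} := by
  let L : E →ₗ[ℝ] WithLp 2 (E × ℝ) := (WithLp.linearEquiv 2 ℝ (E × ℝ)).symm.toLinearMap ∘ₗ
    ((√a • LinearMap.id).prod (√b • innerₛₗ ℝ w))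
  have hL : ∀ x, ‖L x‖ ^ 2 = a * ‖x‖ ^ 2 + b * ⟪w, x⟫ ^ 2 := by
    intro x
    simp [L, WithLp.prod_norm_sq_eq_of_L2, norm_smul, mul_pow, Real.sq_sqrt ha, Real.sq_sqrt hb]
  have hset : {x : E | a * ‖x‖ ^ 2 + b * ⟪w, x⟫ ^ 2 ≤ d * ⟪u, x⟫ ^ 2 ∧ 0 ≤ ⟪u, x⟫}
      = {x | ‖L x‖ - √d * ⟪u, x⟫ ≤ 0} ∩ {x | 0 ≤ ⟪u, x⟫} := by
    ext x
    simp only [Set.mem_ofPred_eq, Set.mem_inter_iff, sub_nonpos, ← hL]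
    refine and_congr_left fun hux => ?_
    rw [← pow_le_pow_iff_left₀ (norm_nonneg _) (by positivity) two_ne_zero, mul_pow,
      Real.sq_sqrt hd]
  rw [hset]
  refine Convex.inter ?_ (convex_halfSpace_ge (innerₛₗ ℝ u).isLinear 0)
  simpa using (((convexOn_norm convex_univ).comp_linearMap L).sub
    ((√d • innerₛₗ ℝ u).concaveOn convex_univ)).convex_le 0

section Sublevel

variable {n : ℕ} {A : Matrix (Fin n) (Fin n) ℝ} {K : Set (EuclideanSpace ℝ (Fin n))}
  {u w : EuclideanSpace ℝ (Fin n)} {lam mu eta : ℝ}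

theorem sublevel_eq_interior_s14
    (hquad : ∀ x, quadForm A x = mu * ‖x‖ ^ 2 + (lam - mu) * ⟪u, x⟫ ^ 2 + (eta - mu) * ⟪w, x⟫ ^ 2)
    (hK : ∀ x ∈ K, (eta - mu) * ⟪w, x⟫ ^ 2 ≤ (mu - lam) * ⟪u, x⟫ ^ 2) {c : ℝ} (hc : mu ≤ c) :
    sublevel A K c = interior K := by
  refine Set.sep_eq_self_iff_mem_true.mpr fun x hx => ?_
  have := hK x (interior_subset hx)
  rw [hquad]
  nlinarith [sq_nonneg ‖x‖]

theorem sublevel_eq_interior_inter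
    (hquad : ∀ x, quadForm A x = mu * ‖x‖ ^ 2 + (lam - mu) * ⟪u, x⟫ ^ 2 + (eta - mu) * ⟪w, x⟫ ^ 2)
    (hK : ∀ x ∈ K, 0 ≤ ⟪u, x⟫) (c : ℝ) :
    sublevel A K c = interior K ∩
      {x | (mu - c) * ‖x‖ ^ 2 + (eta - mu) * ⟪w, x⟫ ^ 2 ≤ (mu - lam) * ⟪u, x⟫ ^ 2 ∧
        0 ≤ ⟪u, x⟫} := by
  ext x
  simp only [sublevel, Set.mem_inter_iff, Set.mem_ofPred_eq, hquad]
  constructor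
  · rintro ⟨hx, hle⟩
    exact ⟨hx, by linarith, hK x (interior_subset hx)⟩
  · rintro ⟨hx, hle, -⟩
    exact ⟨hx, by linarith⟩

theorem convex_sublevel (hKconv : Convex ℝ K)
    (hquad : ∀ x, quadForm A x = mu * ‖x‖ ^ 2 + (lam - mu) * ⟪u, x⟫ ^ 2 + (eta - mu) * ⟪w, x⟫ ^ 2)
    (hK : ∀ x ∈ K, 0 ≤ ⟪u, x⟫ ∧ (eta - mu) * ⟪w, x⟫ ^ 2 ≤ (mu - lam) * ⟪u, x⟫ ^ 2)
    (hlm : lam ≤ mu) (hme : mu ≤ eta) (c : ℝ) :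
    Convex ℝ (sublevel A K c) := by
  rcases le_or_gt mu c with hc | hc
  · rw [sublevel_eq_interior_s14 hquad (fun x hx => (hK x hx).2) hc]
    exact hKconv.interior
  · rw [sublevel_eq_interior_inter hquad (fun x hx => (hK x hx).1)]
    exact hKconv.interior.inter
      (convex_setOf_sq_add_sq_le (sub_nonneg.2 hc.le) (sub_nonneg.2 hme) (sub_nonneg.2 hlm) u w)

end Sublevel

/-- Theorem 2 of the paper: if `A` has eigenvalues `λ < μ = ⋯ = μ < η`, with `vⁿ = p - q`
the Moreau decomposition of `vⁿ` w.r.t. `K`, and `v¹ - √((η-μ)/(μ-λ))·(p + q) ∈ K*`,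
then all sublevel sets `[φ_A ≤ c]` are convex (i.e. `q_A` is spherically quasi-convex). -/
theorem stmt14 (n : ℕ) [NeZero n] (hn : 3 ≤ n)
    (K : Set (EuclideanSpace ℝ (Fin n))) (hK : IsProperCone K) (hsub : K ⊆ dualCone K)
    (A : Matrix (Fin n) (Fin n) ℝ)
    (v : Fin n → EuclideanSpace ℝ (Fin n)) (hv : Orthonormal ℝ v)
    (lam mu eta : ℝ) (hlm : lam < mu) (hme : mu < eta)
    (h1 : Matrix.toEuclideanLin A (v 0) = lam • v 0)
    (hmid : ∀ i : Fin n, i ≠ 0 → i ≠ ⟨n - 1, by omega⟩ →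
      Matrix.toEuclideanLin A (v i) = mu • v i)
    (hlast : Matrix.toEuclideanLin A (v ⟨n - 1, by omega⟩) = eta • v ⟨n - 1, by omega⟩)
    (p q : EuclideanSpace ℝ (Fin n))
    (hp : p ∈ K) (hq : q ∈ dualCone K) (hMoreau : v ⟨n - 1, by omega⟩ = p - q)
    (hcond : v 0 - Real.sqrt ((eta - mu) / (mu - lam)) • (p + q) ∈ dualCone K) :
    ∀ c : ℝ, Convex ℝ (sublevel A K c) := by
  set l : Fin n := ⟨n - 1, by omega⟩
  have hl : (0 : Fin n) ≠ l := Fin.ne_of_val_ne (by simp [l]; omega)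
  let b := (basisOfOrthonormalOfCardEqFinrank hv (by simp)).toOrthonormalBasis (by simpa using hv)
  have hb : ⇑b = v := by simp [b]
  refine convex_sublevel (u := v 0) (w := v l) hK.2.1 (fun x => ?_) (fun x hx => ?_) hlm.le hme.le
  · rw [quadForm, ← hb]
    exact b.inner_apply_self_eq_of_three_eigenvalues _ hl (hb ▸ h1) (hb ▸ hlast) (hb ▸ hmid) x
  · have ht := Real.sq_sqrt (div_nonneg (sub_nonneg.2 hme.le) (sub_nonneg.2 hlm.le))
    obtain ⟨hux, hle⟩ :=
      inner_sq_le_of_sub_smul_mem_dualCone hsub hp hq (Real.sqrt_nonneg _) hcond hx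
    rw [ht, ← hMoreau, div_mul_eq_mul_div, div_le_iff₀ (sub_pos.2 hlm)] at hle
    exact ⟨hux, by linarith⟩
end
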